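/- arXiv:2504.01166 — 7 statements merged into one kernel-verified Lean document; each statement's English description precedes it below -/
import Mathlib

section
/- Let α > 0 and let (x_n)_{n≥0} be the backward orbit of 1 under the branch f̂(x) = x(1+x^α), so f̂(x_{n+1}) = x_n and x₀ = 1. Setting X_n = x_n^{−α}, there exists a constant C' > 0 such that for all sufficiently large n, |X_n − αn| ≤ C' log n. -/
/-!
In the coordinate `X = x ^ (-α)` the map `x ↦ x (1 + x ^ α)` becomes
`X ↦ X (1 + 1/X) ^ (-α) = X - α + O(1/X)`, so going backwards along the orbit `X_n` increases by
`α` up to an error `O(1/X_n)`. Bernoulli's inequality bounds the increment above by `α` and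
below by `α - α(α+1)/(X_n + α + 1)`. The lower bound first shows that `X_n` grows at least
linearly, after which the errors are `O(1/n)` and sum to `O(log n)`.
-/

open Real Filter

theorem one_add_mul_self_le_rpow_one_add_of_nonpos {s p : ℝ} (hs : -1 < s) (hp : p ≤ 0) :
    1 + p * s ≤ (1 + s) ^ p := by
  have hs' : 0 < 1 + s := by linarith
  calc 1 + p * s ≤ 1 + log (1 + s) * p := by
        have hlog : log (1 + s) ≤ s := by linarith [log_le_sub_one_of_pos hs']
        linarith [mul_le_mul_of_nonpos_right hlog hp]
    _ ≤ (1 + s) ^ p := by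
        rw [rpow_def_of_pos hs']
        linarith [add_one_le_exp (log (1 + s) * p)]

/-- The map `x ↦ x (1 + x ^ α)` in the coordinate `X = x ^ (-α)`. -/
noncomputable def powConj (α X : ℝ) : ℝ := X * (1 + X⁻¹) ^ (-α)

section powConj

variable {α Y : ℝ}

theorem rpow_neg_eq_powConj {y : ℝ} (hy : 0 < y) :
    (y * (1 + y ^ α)) ^ (-α) = powConj α (y ^ (-α)) := by
  rw [powConj, rpow_neg hy.le, inv_inv, ← rpow_neg hy.le,
    mul_rpow hy.le (by positivity)]

theorem powConj_pos (hY : 0 < Y) : 0 < powConj α Y := by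
  unfold powConj; positivity

theorem sub_le_powConj (hα : 0 ≤ α) (hY : 0 < Y) : Y - α ≤ powConj α Y := by
  have h := one_add_mul_self_le_rpow_one_add_of_nonpos
    (by linarith [inv_pos.2 hY] : -1 < Y⁻¹) (neg_nonpos.2 hα)
  calc Y - α = Y * (1 + -α * Y⁻¹) := by field_simp; ring
    _ ≤ powConj α Y := mul_le_mul_of_nonneg_left h hY.le

theorem powConj_mul_le (hα : 0 ≤ α) (hY : 0 < Y) :
    powConj α Y * (1 + α / (Y + 1)) ≤ Y := by
  have hu : 0 < 1 + Y⁻¹ := by positivity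
  have hs : -1 < -(Y + 1)⁻¹ := by
    rw [neg_lt_neg_iff]; exact inv_lt_one_of_one_lt₀ (by linarith)
  have h := one_add_mul_self_le_rpow_one_add_of_nonpos hs (neg_nonpos.2 hα)
  have hrw : (1 + -(Y + 1)⁻¹) ^ (-α) = (1 + Y⁻¹) ^ α := by
    rw [show 1 + -(Y + 1)⁻¹ = (1 + Y⁻¹)⁻¹ by field_simp; ring, inv_rpow hu.le,
      rpow_neg hu.le, inv_inv]
  have hbern : 1 + α / (Y + 1) ≤ (1 + Y⁻¹) ^ α := by
    rw [← hrw]; convert h using 1; ring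
  calc powConj α Y * (1 + α / (Y + 1))
      ≤ Y * (1 + Y⁻¹) ^ (-α) * (1 + Y⁻¹) ^ α := by
        unfold powConj; gcongr
    _ = Y := by rw [mul_assoc, ← rpow_add hu, neg_add_cancel, rpow_zero, mul_one]

theorem powConj_add_sub_div_le (hα : 0 ≤ α) (hY : 0 < Y) :
    powConj α Y + α - α * (α + 1) / (powConj α Y + α + 1) ≤ Y := by
  set X := powConj α Y
  have hX : 0 < X := powConj_pos hY
  have hYX : Y + 1 ≤ X + α + 1 := by linarith [sub_le_powConj hα hY]
  calc X + α - α * (α + 1) / (X + α + 1) = X * (1 + α / (X + α + 1)) := by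
        field_simp; ring
    _ ≤ X * (1 + α / (Y + 1)) := by gcongr
    _ ≤ Y := powConj_mul_le hα hY

end powConj

section Increments

variable {α K : ℝ} {X : ℕ → ℝ}

theorem le_add_mul_of_succ_le_add (hup : ∀ n, X (n + 1) ≤ X n + α) (n : ℕ) :
    X n ≤ X 0 + α * n := by
  induction n with
  | zero => simp
  | succ n ih => push_cast; linarith [hup n]

theorem add_mul_sub_mul_harmonic_le (hlow : ∀ n : ℕ, X n + α - K / (n + 1) ≤ X (n + 1))
    (n : ℕ) : X 0 + α * n - K * harmonic n ≤ X n := by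
  induction n with
  | zero => simp
  | succ n ih =>
    have hdiv : K / ((n : ℝ) + 1) = K * ((n : ℝ) + 1)⁻¹ := div_eq_mul_inv _ _
    rw [harmonic_succ]
    push_cast
    linarith [hlow n]

theorem one_add_mul_le_of_add_sub_div_le (hα : 0 < α) (h0 : X 0 = 1)
    (hlow : ∀ n, X n + α - α * (α + 1) / (X n + α + 1) ≤ X (n + 1)) (n : ℕ) :
    1 + α / (α + 2) * n ≤ X n := by
  induction n with
  | zero => simp [h0]
  | succ n ih =>
    have hXn : 1 ≤ X n := le_trans (by simp only [le_add_iff_nonneg_right]; positivity) ih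
    have herr : α * (α + 1) / (X n + α + 1) ≤ α * (α + 1) / (α + 2) :=
      div_le_div_of_nonneg_left (by positivity) (by positivity) (by linarith)
    have hstep : α * (α + 1) / (α + 2) = α - α / (α + 2) := by field_simp; ring
    push_cast
    linarith [hlow n]

theorem abs_sub_mul_le_of_add_sub_div_le (hα : 0 < α) (h0 : X 0 = 1)
    (hup : ∀ n, X (n + 1) ≤ X n + α)
    (hlow : ∀ n, X n + α - α * (α + 1) / (X n + α + 1) ≤ X (n + 1)) (n : ℕ) :
    |X n - α * n| ≤ (α + 1) * (α + 2) * (1 + log n) := by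
  have hK : 1 ≤ (α + 1) * (α + 2) := by nlinarith
  have hlog := log_natCast_nonneg n
  have hlow' : ∀ m : ℕ, X m + α - (α + 1) * (α + 2) / (m + 1) ≤ X (m + 1) := by
    intro m
    have hgrowth := one_add_mul_le_of_add_sub_div_le hα h0 hlow m
    have hgrowth_nonneg : 0 ≤ α / (α + 2) * m := by positivity
    have herr : α * (α + 1) / (X m + α + 1) ≤ (α + 1) * (α + 2) / (m + 1) := by
      rw [div_le_div_iff₀ (by linarith) (by positivity)]
      have hscaled : α * m + (α + 2) ≤ (α + 2) * X m := by
        field_simp at hgrowth; linarith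
      nlinarith
    linarith [hlow m]
  have hH : (harmonic n : ℝ) ≤ 1 + log n := harmonic_le_one_add_log n
  rw [abs_le]
  constructor
  · nlinarith [add_mul_sub_mul_harmonic_le hlow' n]
  · nlinarith [le_add_mul_of_succ_le_add hup n]

end Increments

theorem stmt3 (α : ℝ) (hα : 0 < α) (x : ℕ → ℝ) (hx0 : x 0 = 1)
    (hx : ∀ n, x (n+1) ∈ Set.Ioo (0:ℝ) (x n) ∧ x (n+1) * (1 + x (n+1) ^ α) = x n) :
    ∃ C' > (0:ℝ), ∀ᶠ n : ℕ in Filter.atTop,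
      |(x n) ^ (-α) - α * n| ≤ C' * Real.log n := by
  set X : ℕ → ℝ := fun n => x n ^ (-α)
  have hpos n : 0 < X (n + 1) := rpow_pos_of_pos (hx n).1.1 _
  have hrec n : X n = powConj α (X (n + 1)) := by
    simp only [X, ← (hx n).2]
    exact rpow_neg_eq_powConj (hx n).1.1
  have h0 : X 0 = 1 := by simp [X, hx0]
  have hup n : X (n + 1) ≤ X n + α := by
    rw [hrec n]; linarith [sub_le_powConj hα.le (hpos n)]
  have hlow n : X n + α - α * (α + 1) / (X n + α + 1) ≤ X (n + 1) := by
    rw [hrec n]; exact powConj_add_sub_div_le hα.le (hpos n)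
  refine ⟨2 * ((α + 1) * (α + 2)), by positivity, ?_⟩
  filter_upwards [eventually_ge_atTop 3] with n hn
  have hlog : 1 ≤ log n := by
    have : log 3 ≤ log n := log_le_log (by norm_num) (by exact_mod_cast hn)
    linarith [log_three_gt_d9]
  calc |X n - α * n| ≤ (α + 1) * (α + 2) * (1 + log n) :=
        abs_sub_mul_le_of_add_sub_div_le hα h0 hup hlow n
    _ ≤ 2 * ((α + 1) * (α + 2)) * log n := by
        nlinarith [mul_le_mul_of_nonneg_left hlog (by positivity : 0 ≤ (α + 1) * (α + 2))]
end

section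
/- Let α > 0, f the Manneville–Pomeau map of parameter α, and (x_n)_{n≥0} the backward orbit of 1 under the indifferent branch, with J_n = (x_{n+1}, x_n]. There exists ε₀ ∈ (0,1) such that for all n ≥ 1 and all x ∈ J_n, (1 + ε₀ n)^{1/α + 1} ≤ Df^n(x) ≤ (1 + ε₀^{−1} n)^{1/α + 1}. -/
/-!
Write `v n = x n ^ (-α)` and `t = x (n + 1) ^ α ∈ (0, 1]`. The recursion gives
`v (n + 1) - v n = (1 - (1 + t) ^ (-α)) / t ∈ [1 - 2 ^ (-α), α]`,
so `v n` grows linearly in `n`.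

For `y ∈ J_n` the orbit point `f^j y` lies in `J_{n-j}`, so `Df^n y` is squeezed between
the products of `1 + (α + 1) x_k ^ α` over `2 ≤ k ≤ n + 1` and over `1 ≤ k ≤ n`.
By Bernoulli the upper product is at most
`∏ (1 + x_k ^ α) ^ (α + 1) = x_n ^ (-(α + 1)) = v_n ^ (1/α + 1)`.
Conversely `1 + (α + 1) t ≥ (1 + t) ^ (α + 1) e ^ (-((α + 1) t) ^ 2)`, and `∑ x_k ^ (2α) < ∞`
because `v` grows linearly, so the lower product is at least a constant times
`v_{n+1} ^ (1/α + 1)`.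
-/

open Real Set Filter Topology

/-- The Manneville–Pomeau map of parameter `α`. -/
noncomputable def MP (α : ℝ) : ℝ → ℝ := fun x =>
  if x * (1 + x ^ α) ≤ 1 then x * (1 + x ^ α) else x * (1 + x ^ α) - 1

/-- Derivative of the `n`-th iterate of the Manneville–Pomeau map along the orbit
(product of the branch derivatives `1 + (α+1) x^α`). -/
noncomputable def Dfn (α : ℝ) (n : ℕ) (x : ℝ) : ℝ :=
  ∏ j ∈ Finset.range n, (1 + (α + 1) * ((MP α)^[j] x) ^ α)

lemma one_sub_mul_le_one_add_rpow_neg {α t : ℝ} (hα : 0 ≤ α) (ht : 0 ≤ t) :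
    1 - α * t ≤ (1 + t) ^ (-α) :=
  calc 1 - α * t ≤ exp (-α * t) := by linarith [add_one_le_exp (-α * t)]
    _ = exp t ^ (-α) := by rw [← exp_mul, mul_comm]
    _ ≤ (1 + t) ^ (-α) :=
      rpow_le_rpow_of_nonpos (by positivity) (by linarith [add_one_le_exp t]) (by linarith)

lemma one_add_rpow_neg_le {α t : ℝ} (hα : 0 ≤ α) (ht₀ : 0 ≤ t) (ht₁ : t ≤ 1) :
    (1 + t) ^ (-α) ≤ 1 - (1 - 2 ^ (-α)) * t := by
  -- the chord bound for the convex map `t ↦ (1 + t) ^ (-α)`, from two weighted AM-GM steps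
  have two_rpow_le : (2 : ℝ) ^ t ≤ 1 + t := by
    have := geom_mean_le_arith_mean2_weighted (sub_nonneg.2 ht₁) ht₀ zero_le_one zero_le_two
      (sub_add_cancel 1 t)
    rw [one_rpow, one_mul] at this
    linarith
  calc (1 + t) ^ (-α) ≤ ((2 : ℝ) ^ t) ^ (-α) :=
        rpow_le_rpow_of_nonpos (by positivity) two_rpow_le (by linarith)
    _ = 1 ^ (1 - t) * ((2 : ℝ) ^ (-α)) ^ t := by
        rw [one_rpow, one_mul, ← rpow_mul zero_le_two, ← rpow_mul zero_le_two, mul_comm]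
    _ ≤ (1 - t) * 1 + t * 2 ^ (-α) :=
        geom_mean_le_arith_mean2_weighted (sub_nonneg.2 ht₁) ht₀ zero_le_one (by positivity)
          (sub_add_cancel 1 t)
    _ = 1 - (1 - 2 ^ (-α)) * t := by ring

lemma sub_sq_le_log_one_add {u : ℝ} (hu : 0 ≤ u) : u - u ^ 2 ≤ log (1 + u) := by
  have h := one_sub_inv_le_log_of_pos (show 0 < 1 + u by linarith)
  have : (1 + u)⁻¹ ≤ 1 - u + u ^ 2 := by
    rw [inv_le_iff_one_le_mul₀ (by positivity)]
    nlinarith [pow_nonneg hu 3]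
  linarith

lemma one_add_rpow_mul_exp_le {β t : ℝ} (hβ : 0 ≤ β) (ht : 0 ≤ t) :
    (1 + t) ^ β * exp (-(β * t) ^ 2) ≤ 1 + β * t := by
  have hlog : log (1 + t) ≤ t := by
    linarith [log_le_sub_one_of_pos (show 0 < 1 + t by linarith)]
  have hlog' := sub_sq_le_log_one_add (mul_nonneg hβ ht)
  rw [← exp_log (show 0 < 1 + β * t by positivity), rpow_def_of_pos (by linarith), ← exp_add]
  exact exp_le_exp.2 (by nlinarith)

lemma exists_one_add_mul_le {g : ℕ → ℝ} {d b : ℝ} (hd : 1 < d) (hb : 0 < b)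
    (hgd : ∀ n, 1 ≤ n → d ≤ g n) (hgb : ∀ n : ℕ, b * n ≤ g n) :
    ∃ ε > 0, ∀ n : ℕ, 1 ≤ n → 1 + ε * n ≤ g n := by
  set ε := min (b / 2) ((d - 1) * b / 2)
  refine ⟨ε, lt_min (by positivity) (by nlinarith), fun n hn => ?_⟩
  have hε₁ : ε * n ≤ b / 2 * n := by gcongr; exact min_le_left _ _
  have hε₂ : ε * n ≤ (d - 1) * b / 2 * n := by gcongr; exact min_le_right _ _
  rcases le_or_gt (ε * n) (d - 1) with h | h
  · linarith [hgd n hn]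
  · have : 1 < b / 2 * n := by nlinarith
    linarith [hgb n]

lemma exists_one_add_mul_rpow_le {P : ℕ → ℝ} {q C d b : ℝ} (hq : 0 < q) (hC : 0 < C)
    (hd : 1 < d) (hb : 0 < b) (hPd : ∀ n, 1 ≤ n → d ≤ P n)
    (hPb : ∀ n : ℕ, C * (b * n) ^ q ≤ P n) :
    ∃ ε > 0, ∀ n : ℕ, 1 ≤ n → (1 + ε * n) ^ q ≤ P n := by
  have hP : ∀ n, 0 ≤ P n := fun n => (by positivity : 0 ≤ C * (b * n) ^ q).trans (hPb n)
  obtain ⟨ε, hε, h⟩ := exists_one_add_mul_le (g := fun n => P n ^ q⁻¹) (b := C ^ q⁻¹ * b)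
    (one_lt_rpow hd (inv_pos.2 hq)) (by positivity)
    (fun n hn => rpow_le_rpow (by linarith) (hPd n hn) (inv_pos.2 hq).le)
    fun n => calc
      C ^ q⁻¹ * b * n = (C * (b * n) ^ q) ^ q⁻¹ := by
        rw [mul_rpow hC.le (by positivity), rpow_rpow_inv (by positivity) hq.ne', mul_assoc]
      _ ≤ P n ^ q⁻¹ := rpow_le_rpow (by positivity) (hPb n) (by positivity)
  exact ⟨ε, hε, fun n hn => (le_rpow_inv_iff_of_pos (by positivity) (hP n) hq).1 (h n hn)⟩

lemma Finset.prod_range_reflect_succ {M : Type*} [CommMonoid M] (f : ℕ → M) (n : ℕ) :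
    ∏ j ∈ Finset.range n, f (n - j) = ∏ k ∈ Finset.range n, f (k + 1) := by
  rw [← Finset.prod_range_reflect (fun k => f (k + 1))]
  exact Finset.prod_congr rfl fun j hj => by
    have := Finset.mem_range.1 hj
    congr 1
    omega

lemma strictMonoOn_mul_one_add_rpow {α : ℝ} (hα : 0 ≤ α) :
    StrictMonoOn (fun z : ℝ => z * (1 + z ^ α)) (Ici 0) := by
  intro u (hu : 0 ≤ u) w _ huw
  have : u ^ α ≤ w ^ α := rpow_le_rpow hu huw.le hα
  have : 0 ≤ u ^ α := rpow_nonneg hu α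
  dsimp only
  nlinarith [mul_nonneg hu (sub_nonneg.2 this)]

lemma rpow_neg_rpow_one_div_add_one {y α : ℝ} (hy : 0 < y) (hα : α ≠ 0) :
    (y ^ (-α)) ^ (1 / α + 1) = y⁻¹ ^ (α + 1) := by
  rw [← rpow_mul hy.le, inv_rpow hy.le, ← rpow_neg hy.le]
  congr 1
  field_simp
  ring

structure IsBackwardOrbit (α : ℝ) (x : ℕ → ℝ) : Prop where
  zero : x 0 = 1
  mem_Ioo : ∀ n, x (n + 1) ∈ Ioo 0 (x n)
  map_succ : ∀ n, x (n + 1) * (1 + x (n + 1) ^ α) = x n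

namespace IsBackwardOrbit

variable {α : ℝ} {x : ℕ → ℝ}

theorem pos (hx : IsBackwardOrbit α x) : ∀ n, 0 < x n
  | 0 => hx.zero ▸ one_pos
  | n + 1 => (hx.mem_Ioo n).1

theorem le_one (hx : IsBackwardOrbit α x) : ∀ n, x n ≤ 1
  | 0 => hx.zero.le
  | n + 1 => (hx.mem_Ioo n).2.le.trans (hx.le_one n)

theorem mapsTo (hx : IsBackwardOrbit α x) (hα : 0 ≤ α) (k : ℕ) :
    MapsTo (MP α) (Ioc (x (k + 2)) (x (k + 1))) (Ioc (x (k + 1)) (x k)) := by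
  rintro z ⟨hz₁, hz₂⟩
  have hmono := strictMonoOn_mul_one_add_rpow hα
  have hz : z ∈ Ici 0 := (hx.pos (k + 2)).le.trans hz₁.le
  have hlt : x (k + 1) < z * (1 + z ^ α) :=
    hx.map_succ (k + 1) ▸ hmono (hx.pos (k + 2)).le hz hz₁
  have hle : z * (1 + z ^ α) ≤ x k :=
    hx.map_succ k ▸ hmono.monotoneOn hz (hx.pos (k + 1)).le hz₂
  have hMP : MP α z = z * (1 + z ^ α) := if_pos (hle.trans (hx.le_one k))
  exact hMP ▸ ⟨hlt, hle⟩

theorem iterate_mapsTo (hx : IsBackwardOrbit α x) (hα : 0 ≤ α) (n j : ℕ) :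
    MapsTo (MP α)^[j] (Ioc (x (n + j + 1)) (x (n + j))) (Ioc (x (n + 1)) (x n)) := by
  induction j generalizing n with
  | zero => exact mapsTo_id _
  | succ j ih =>
    rw [Function.iterate_succ', show n + (j + 1) = n + 1 + j by omega]
    exact (hx.mapsTo hα n).comp (ih (n + 1))

theorem iterate_mem (hx : IsBackwardOrbit α x) (hα : 0 ≤ α) {n j : ℕ} (hj : j ≤ n) {y : ℝ}
    (hy : y ∈ Ioc (x (n + 1)) (x n)) : (MP α)^[j] y ∈ Ioc (x (n - j + 1)) (x (n - j)) :=
  hx.iterate_mapsTo hα (n - j) j (by rwa [Nat.sub_add_cancel hj])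

theorem Dfn_le_prod (hx : IsBackwardOrbit α x) (hα : 0 ≤ α) {n : ℕ} {y : ℝ}
    (hy : y ∈ Ioc (x (n + 1)) (x n)) :
    Dfn α n y ≤ ∏ k ∈ Finset.range n, (1 + (α + 1) * x (k + 1) ^ α) := by
  rw [← Finset.prod_range_reflect_succ (fun k => 1 + (α + 1) * x k ^ α)]
  have hmem j (hj : j ∈ Finset.range n) := hx.iterate_mem hα (Finset.mem_range.1 hj).le hy
  have hpos j (hj : j ∈ Finset.range n) := (hx.pos _).trans (hmem j hj).1
  refine Finset.prod_le_prod (fun j hj => by have := hpos j hj; positivity) fun j hj => ?_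
  have := rpow_le_rpow (hpos j hj).le (hmem j hj).2 hα
  gcongr

theorem prod_le_Dfn (hx : IsBackwardOrbit α x) (hα : 0 ≤ α) {n : ℕ} {y : ℝ}
    (hy : y ∈ Ioc (x (n + 1)) (x n)) :
    ∏ k ∈ Finset.range n, (1 + (α + 1) * x (k + 2) ^ α) ≤ Dfn α n y := by
  rw [← Finset.prod_range_reflect_succ (fun k => 1 + (α + 1) * x (k + 1) ^ α)]
  refine Finset.prod_le_prod (fun j _ => by have := hx.pos (n - j + 1); positivity)
    fun j hj => ?_
  have hmem := hx.iterate_mem hα (Finset.mem_range.1 hj).le hy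
  have := rpow_le_rpow (hx.pos _).le hmem.1.le hα
  gcongr

theorem prod_one_add_rpow (hx : IsBackwardOrbit α x) (m n : ℕ) :
    ∏ k ∈ Finset.range n, (1 + x (m + k + 1) ^ α) = x m / x (m + n) := by
  induction n with
  | zero => simp [(hx.pos m).ne']
  | succ n ih =>
    rw [Finset.prod_range_succ, ih, ← add_assoc, ← hx.map_succ (m + n)]
    have := hx.pos (m + n + 1)
    have : 0 < 1 + x (m + n + 1) ^ α := by positivity
    field_simp

theorem rpow_neg_eq (hx : IsBackwardOrbit α x) (n : ℕ) :
    x n ^ (-α) = x (n + 1) ^ (-α) * (1 + x (n + 1) ^ α) ^ (-α) := by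
  have := hx.pos (n + 1)
  rw [← hx.map_succ n, mul_rpow this.le (by positivity)]

theorem rpow_neg_mul_rpow (hx : IsBackwardOrbit α x) (n : ℕ) : x n ^ (-α) * x n ^ α = 1 := by
  rw [rpow_neg (hx.pos n).le, inv_mul_cancel₀ (rpow_pos_of_pos (hx.pos n) α).ne']

theorem rpow_neg_succ_sub_le (hx : IsBackwardOrbit α x) (hα : 0 ≤ α) (n : ℕ) :
    x (n + 1) ^ (-α) - x n ^ (-α) ≤ α := by
  have := hx.pos (n + 1)
  rw [hx.rpow_neg_eq n]
  calc x (n + 1) ^ (-α) - x (n + 1) ^ (-α) * (1 + x (n + 1) ^ α) ^ (-α)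
      ≤ x (n + 1) ^ (-α) - x (n + 1) ^ (-α) * (1 - α * x (n + 1) ^ α) := by
        gcongr
        exact one_sub_mul_le_one_add_rpow_neg hα (by positivity)
    _ = α * (x (n + 1) ^ (-α) * x (n + 1) ^ α) := by ring
    _ = α := by rw [hx.rpow_neg_mul_rpow, mul_one]

theorem le_rpow_neg_succ_sub (hx : IsBackwardOrbit α x) (hα : 0 ≤ α) (n : ℕ) :
    1 - 2 ^ (-α) ≤ x (n + 1) ^ (-α) - x n ^ (-α) := by
  have := hx.pos (n + 1)
  rw [hx.rpow_neg_eq n]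
  calc 1 - 2 ^ (-α) = (1 - 2 ^ (-α)) * (x (n + 1) ^ (-α) * x (n + 1) ^ α) := by
        rw [hx.rpow_neg_mul_rpow, mul_one]
    _ = x (n + 1) ^ (-α) - x (n + 1) ^ (-α) * (1 - (1 - 2 ^ (-α)) * x (n + 1) ^ α) := by ring
    _ ≤ x (n + 1) ^ (-α) - x (n + 1) ^ (-α) * (1 + x (n + 1) ^ α) ^ (-α) := by
        gcongr
        exact one_add_rpow_neg_le hα (by positivity) (rpow_le_one this.le (hx.le_one _) hα)

theorem rpow_neg_le (hx : IsBackwardOrbit α x) (hα : 0 ≤ α) (n : ℕ) :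
    x n ^ (-α) ≤ 1 + α * n := by
  induction n with
  | zero => simp [hx.zero]
  | succ n ih => push_cast; linarith [hx.rpow_neg_succ_sub_le hα n]

theorem le_rpow_neg (hx : IsBackwardOrbit α x) (hα : 0 ≤ α) (n : ℕ) :
    1 + (1 - 2 ^ (-α)) * n ≤ x n ^ (-α) := by
  induction n with
  | zero => simp [hx.zero]
  | succ n ih => push_cast; linarith [hx.le_rpow_neg_succ_sub hα n]


theorem prod_le_one_add_mul_rpow (hx : IsBackwardOrbit α x) (hα : 0 < α) (n : ℕ) :
    ∏ k ∈ Finset.range n, (1 + (α + 1) * x (k + 1) ^ α) ≤ (1 + α * n) ^ (1 / α + 1) := by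
  have ht k : 0 ≤ x k ^ α := rpow_nonneg (hx.pos k).le α
  calc ∏ k ∈ Finset.range n, (1 + (α + 1) * x (k + 1) ^ α)
      ≤ ∏ k ∈ Finset.range n, (1 + x (k + 1) ^ α) ^ (α + 1) :=
        Finset.prod_le_prod (fun k _ => by have := ht (k + 1); positivity) fun k _ =>
          one_add_mul_self_le_rpow_one_add (by linarith [ht (k + 1)]) (by linarith)
    _ = (x n ^ (-α)) ^ (1 / α + 1) := by
        rw [Real.finsetProd_rpow _ _ fun k _ => by linarith [ht (k + 1)],
          rpow_neg_rpow_one_div_add_one (hx.pos n) hα.ne']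
        simpa [hx.zero] using congrArg (· ^ (α + 1)) (hx.prod_one_add_rpow 0 n)
    _ ≤ (1 + α * n) ^ (1 / α + 1) :=
        rpow_le_rpow (rpow_nonneg (hx.pos n).le _) (hx.rpow_neg_le hα.le n) (by positivity)

theorem summable_sq_rpow (hx : IsBackwardOrbit α x) (hα : 0 < α) :
    Summable fun k => (x k ^ α) ^ 2 := by
  set a : ℝ := 1 - 2 ^ (-α)
  have ha₀ : 0 < a := sub_pos.2 (rpow_lt_one_of_one_lt_of_neg one_lt_two (neg_lt_zero.2 hα))
  have ha₁ : a ≤ 1 := sub_le_self _ (by positivity)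
  have hbound (k : ℕ) : x k ^ α ≤ (a * (k + 1))⁻¹ := by
    have := hx.le_rpow_neg hα.le k
    calc x k ^ α = (x k ^ (-α))⁻¹ := by rw [rpow_neg (hx.pos k).le, inv_inv]
      _ ≤ (a * (k + 1))⁻¹ := inv_anti₀ (by positivity) (by nlinarith)
  have hs : Summable fun k : ℕ => (((k : ℝ) + 1) ^ 2)⁻¹ := by
    simpa using (summable_nat_add_iff 1).2 (Real.summable_nat_pow_inv.2 one_lt_two)
  refine (hs.mul_left (a⁻¹ ^ 2)).of_nonneg_of_le (fun k => sq_nonneg _) fun k => ?_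
  calc (x k ^ α) ^ 2 ≤ ((a * (k + 1))⁻¹) ^ 2 :=
        pow_le_pow_left₀ (rpow_nonneg (hx.pos k).le α) (hbound k) 2
    _ = a⁻¹ ^ 2 * (((k : ℝ) + 1) ^ 2)⁻¹ := by rw [mul_inv, mul_pow, inv_pow ((k : ℝ) + 1)]

theorem exists_mul_rpow_le_prod (hx : IsBackwardOrbit α x) (hα : 0 < α) :
    ∃ C > 0, ∀ n : ℕ, C * (x (n + 1) ^ (-α)) ^ (1 / α + 1) ≤
      ∏ k ∈ Finset.range n, (1 + (α + 1) * x (k + 2) ^ α) := by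
  have hS : Summable fun k => (x (k + 2) ^ α) ^ 2 :=
    (summable_nat_add_iff 2).2 (hx.summable_sq_rpow hα)
  set S := ∑' k, (x (k + 2) ^ α) ^ 2
  have ht k : 0 ≤ x k ^ α := rpow_nonneg (hx.pos k).le α
  have := hx.pos 1
  refine ⟨x 1 ^ (α + 1) * exp (-(α + 1) ^ 2 * S), by positivity, fun n => ?_⟩
  set s := ∑ k ∈ Finset.range n, (x (k + 2) ^ α) ^ 2
  have hexp : ∏ k ∈ Finset.range n, exp (-((α + 1) * x (k + 2) ^ α) ^ 2)
      = exp (-(α + 1) ^ 2 * s) := by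
    rw [← exp_sum, Finset.mul_sum]
    exact congrArg exp (Finset.sum_congr rfl fun k _ => by ring)
  have htel : ∏ k ∈ Finset.range n, (1 + x (k + 2) ^ α) = x 1 / x (n + 1) := by
    simpa [add_assoc, add_comm 1] using hx.prod_one_add_rpow 1 n
  have := hx.pos (n + 1)
  calc x 1 ^ (α + 1) * exp (-(α + 1) ^ 2 * S) * (x (n + 1) ^ (-α)) ^ (1 / α + 1)
      = (x 1 / x (n + 1)) ^ (α + 1) * exp (-(α + 1) ^ 2 * S) := by
        rw [rpow_neg_rpow_one_div_add_one (hx.pos _) hα.ne', div_eq_mul_inv,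
          mul_rpow (hx.pos 1).le (inv_nonneg.2 (hx.pos _).le)]
        ring
    _ ≤ (x 1 / x (n + 1)) ^ (α + 1) * exp (-(α + 1) ^ 2 * s) := by
        have := hS.sum_le_tsum (Finset.range n) fun k _ => sq_nonneg _
        exact mul_le_mul_of_nonneg_left (exp_le_exp.2 (by nlinarith)) (by positivity)
    _ = ∏ k ∈ Finset.range n,
          ((1 + x (k + 2) ^ α) ^ (α + 1) * exp (-((α + 1) * x (k + 2) ^ α) ^ 2)) := by
        rw [Finset.prod_mul_distrib, hexp, htel.symm,
          Real.finsetProd_rpow _ _ fun k _ => by linarith [ht (k + 2)]]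
    _ ≤ ∏ k ∈ Finset.range n, (1 + (α + 1) * x (k + 2) ^ α) :=
        Finset.prod_le_prod (fun k _ => by have := ht (k + 2); positivity) fun k _ =>
          one_add_rpow_mul_exp_le (by linarith) (ht (k + 2))

theorem exists_one_add_mul_rpow_le_prod (hx : IsBackwardOrbit α x) (hα : 0 < α) :
    ∃ ε > 0, ∀ n : ℕ, 1 ≤ n →
      (1 + ε * n) ^ (1 / α + 1) ≤ ∏ k ∈ Finset.range n, (1 + (α + 1) * x (k + 2) ^ α) := by
  obtain ⟨C, hC, hCP⟩ := hx.exists_mul_rpow_le_prod hα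
  have ha : 0 < 1 - (2 : ℝ) ^ (-α) :=
    sub_pos.2 (rpow_lt_one_of_one_lt_of_neg one_lt_two (neg_lt_zero.2 hα))
  have hfac k : 1 ≤ 1 + (α + 1) * x k ^ α :=
    le_add_of_nonneg_right (mul_nonneg (by linarith) (rpow_nonneg (hx.pos k).le α))
  refine exists_one_add_mul_rpow_le (d := 1 + (α + 1) * x 2 ^ α) (by positivity) hC
    (lt_add_of_pos_right 1 (mul_pos (by linarith) (rpow_pos_of_pos (hx.pos 2) α))) ha ?_
    fun n => ?_
  · rintro (_ | m) hm
    · omega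
    rw [Finset.prod_range_succ']
    exact le_mul_of_one_le_left (zero_le_one.trans (hfac _))
      (Finset.one_le_prod fun k _ => hfac _)
  · have := hx.le_rpow_neg hα.le (n + 1)
    push_cast at this
    calc C * ((1 - 2 ^ (-α)) * n) ^ (1 / α + 1)
        ≤ C * (x (n + 1) ^ (-α)) ^ (1 / α + 1) := by gcongr; nlinarith
      _ ≤ _ := hCP n

end IsBackwardOrbit

theorem stmt4 (α : ℝ) (hα : 0 < α) (x : ℕ → ℝ) (hx0 : x 0 = 1)
    (hx : ∀ n, x (n+1) ∈ Set.Ioo (0:ℝ) (x n) ∧ x (n+1) * (1 + x (n+1) ^ α) = x n) :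
    ∃ ε₀ ∈ Set.Ioo (0:ℝ) 1, ∀ n : ℕ, 1 ≤ n → ∀ y ∈ Set.Ioc (x (n+1)) (x n),
      (1 + ε₀ * n) ^ (1/α + 1) ≤ Dfn α n y ∧
      Dfn α n y ≤ (1 + ε₀⁻¹ * n) ^ (1/α + 1) := by
  have horb : IsBackwardOrbit α x := ⟨hx0, fun n => (hx n).1, fun n => (hx n).2⟩
  obtain ⟨ε, hε, hlower⟩ := horb.exists_one_add_mul_rpow_le_prod hα
  set ε₀ := min ε (α + 1)⁻¹
  have hε₀ : 0 < ε₀ := lt_min hε (by positivity)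
  have hαε₀ : α ≤ ε₀⁻¹ := by
    have := (le_inv_comm₀ hε₀ (by positivity)).1 (min_le_right ε (α + 1)⁻¹)
    linarith
  refine ⟨ε₀, ⟨hε₀, (min_le_right _ _).trans_lt (inv_lt_one_of_one_lt₀ (by linarith))⟩,
    fun n hn y hy => ⟨?_, ?_⟩⟩
  · calc (1 + ε₀ * n) ^ (1 / α + 1) ≤ (1 + ε * n) ^ (1 / α + 1) := by
          gcongr
          exact min_le_left _ _
      _ ≤ _ := hlower n hn
      _ ≤ Dfn α n y := horb.prod_le_Dfn hα.le hy
  · calc Dfn α n y ≤ _ := horb.Dfn_le_prod hα.le hy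
      _ ≤ (1 + α * n) ^ (1 / α + 1) := horb.prod_le_one_add_mul_rpow hα n
      _ ≤ (1 + ε₀⁻¹ * n) ^ (1 / α + 1) := by gcongr
end

section
/- Let α > 0 and f the Manneville–Pomeau map of parameter α. There exist ε₁ ∈ (0,1) and C₁ > 1 such that for every n ≥ 1 and every connected component J of f^{−n}(J₀) (where J₀ = (x₁, 1]): (a) |J| ≤ |J₀|/(1+ε₁ n)^{1/α+1}; (b) for all x ∈ J, Df^n(x) ≥ (1+ε₁ n)^{1/α+1}; and (c) for all x, y ∈ J, C₁^{−1} ≤ Df^n(x)/Df^n(y) ≤ C₁. -/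
open Real Set Filter Topology

/-!
Split the orbit of a point of a cylinder into blocks: a single step on the uniformly expanding
branch `x > x₁`, or an excursion near the neutral fixed point `0`. An excursion of length `k`
starting at `z` has `k ≲ z ^ (-α)`, because `x ^ (-α)` drops by a definite amount at each step,
while its derivative is `≳ z ^ (-(α + 1))`, because each factor `1 + (α + 1) x ^ α` is the growth
of `x ^ (α + 1)` up to a factor `exp (O (x ^ (2 α)))`, and these are summable along the excursion.
So a block of length `k` expands by `≳ k ^ (1/α + 1)`, and concatenating blocks gives (b).

A component `J` is an interval that no iterate `f ^ j`, `j < n`, splits at `x₁`, so `f ^ n` is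
a convex increasing map on `J` and (a) follows from (b). For (c), (a) at time `n - j` makes the
orbits of two points of `J` `(n - j) ^ (-(1/α + 1))`-close at time `j`; as `log Df` is
`min α 1`-Hölder, the log-derivatives differ by a series with exponent
`(1/α + 1) * min α 1 > 1`.
-/

namespace MannevillePomeau

variable {α x₁ : ℝ}

lemma rpow_add_mul_sub_le {p z w : ℝ} (hp : 1 ≤ p) (hz : 0 < z) (hw : 0 ≤ w) :
    z ^ p + p * z ^ (p - 1) * (w - z) ≤ w ^ p := by
  have hzp : 0 < z ^ p := rpow_pos_of_pos hz p
  have hbern := one_add_mul_self_le_rpow_one_add (s := w / z - 1) (by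
    linarith [div_nonneg hw hz.le]) hp
  rw [add_sub_cancel, div_rpow hw hz.le, le_div_iff₀ hzp] at hbern
  have hz1 : z ^ (p - 1) = z ^ p / z := by rw [rpow_sub hz, rpow_one]
  rw [hz1]
  calc z ^ p + p * (z ^ p / z) * (w - z) = (1 + p * (w / z - 1)) * z ^ p := by
        field_simp
    _ ≤ w ^ p := hbern

lemma rpow_sub_rpow_le (hα : 0 < α) {x y : ℝ} (hx : 0 ≤ x) (hxy : x ≤ y) (hy : y ≤ 1) :
    y ^ α - x ^ α ≤ max α 1 * (y - x) ^ min α 1 := by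
  rcases le_total α 1 with hα1 | hα1
  · rw [min_eq_left hα1]
    have hsub := rpow_add_le_add_rpow hx (sub_nonneg.2 hxy) hα.le hα1
    rw [add_sub_cancel] at hsub
    nlinarith [le_max_right α 1, rpow_nonneg (sub_nonneg.2 hxy) α]
  · rw [min_eq_right hα1, max_eq_left hα1, rpow_one]
    rcases (hx.trans hxy).eq_or_lt with hy0 | hy0
    · simp [← hy0, le_antisymm (hy0 ▸ hxy) hx]
    have htangent := rpow_add_mul_sub_le hα1 hy0 hx
    have hpow : y ^ (α - 1) ≤ 1 := rpow_le_one hy0.le hy (by linarith)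
    nlinarith [rpow_nonneg hy0.le (α - 1), mul_nonneg hα.le (sub_nonneg.2 hxy)]

lemma one_add_mul_div_le_one_add_rpow {p t : ℝ} (hp : 0 ≤ p) (ht : 0 ≤ t) :
    1 + p * (t / (1 + t)) ≤ (1 + t) ^ p := by
  have ht1 : 0 < 1 + t := by linarith
  have hlog : t / (1 + t) ≤ log (1 + t) := by
    have := one_sub_inv_le_log_of_pos ht1
    rwa [show 1 - (1 + t)⁻¹ = t / (1 + t) by field_simp; ring] at this
  rw [rpow_def_of_pos ht1]
  nlinarith [add_one_le_exp (log (1 + t) * p)]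

lemma one_add_rpow_le_mul_exp {p t : ℝ} (hp : 0 ≤ p) (ht : 0 ≤ t) :
    (1 + t) ^ p ≤ (1 + p * t) * exp (p ^ 2 * t ^ 2) := by
  have hpt : 0 ≤ p * t := mul_nonneg hp ht
  have hpt1 : 0 < 1 + p * t := by linarith
  rw [rpow_def_of_pos (by linarith), ← exp_log hpt1, ← exp_add, exp_le_exp]
  have hlog_le : log (1 + t) ≤ t := by linarith [log_le_sub_one_of_pos (by linarith : 0 < 1 + t)]
  have hlog_ge : p * t - p ^ 2 * t ^ 2 ≤ log (1 + p * t) := by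
    have := one_sub_inv_le_log_of_pos hpt1
    rw [show 1 - (1 + p * t)⁻¹ = p * t / (1 + p * t) by field_simp; ring] at this
    refine le_trans ?_ this
    rw [le_div_iff₀ hpt1]
    nlinarith [pow_nonneg hpt 3]
  nlinarith

/-- Compare `X` with a convex combination of the two lower bounds. -/
lemma exists_one_add_mul_le {η γ : ℝ} (hη : 0 < η) (hγ : 0 < γ) :
    ∃ c > 0, ∀ k X : ℝ, 1 ≤ k → 1 + η ≤ X → γ * (k - 1) ≤ X → 1 + c * k ≤ X := by
  set d := η * γ / (2 * (1 + η))
  refine ⟨min (η / 2) d, by positivity, fun k X hk hX hXk => ?_⟩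
  have hmix : 1 + η / 2 + d * (k - 1) ≤ X := by
    have hcomb : (1 + η) * (1 + η / 2 + d * (k - 1)) =
        (1 + η / 2) * (1 + η) + η / 2 * (γ * (k - 1)) := by
      simp only [d]
      field_simp
    refine le_of_mul_le_mul_left ?_ (by linarith : 0 < 1 + η)
    rw [hcomb]
    nlinarith
  have h1 : min (η / 2) d ≤ η / 2 := min_le_left _ _
  have h2 : min (η / 2) d * (k - 1) ≤ d * (k - 1) :=
    mul_le_mul_of_nonneg_right (min_le_right _ _) (by linarith)
  linarith

lemma exists_one_add_mul_rpow_le {p δ a b : ℝ} (hp : 0 < p) (hδ : 0 < δ) (ha : 0 < a)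
    (hb : 0 < b) : ∃ c > 0, ∀ k D : ℝ, 1 ≤ k → 1 + δ ≤ D → a * (b * (k - 1)) ^ p ≤ D →
      (1 + c * k) ^ p ≤ D := by
  have hη : 0 < (1 + δ) ^ p⁻¹ - 1 := sub_pos.2 (one_lt_rpow (by linarith) (inv_pos.2 hp))
  obtain ⟨c, hc, hlin⟩ := exists_one_add_mul_le hη (mul_pos (rpow_pos_of_pos ha p⁻¹) hb)
  refine ⟨c, hc, fun k D hk hD hDk => ?_⟩
  have hbk : 0 ≤ b * (k - 1) := mul_nonneg hb.le (by linarith)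
  rw [← le_rpow_inv_iff_of_pos (by positivity) (by linarith) hp]
  refine hlin k _ hk (by linarith [rpow_le_rpow (by linarith) hD (inv_pos.2 hp).le]) ?_
  calc a ^ p⁻¹ * b * (k - 1) = (a * (b * (k - 1)) ^ p) ^ p⁻¹ := by
        rw [mul_rpow ha.le (rpow_nonneg hbk p), rpow_rpow_inv hbk hp.ne', mul_assoc]
    _ ≤ D ^ p⁻¹ := rpow_le_rpow (by positivity) hDk (inv_pos.2 hp).le

lemma sum_range_natCast_sub_rpow_le_tsum {ρ : ℝ} (hρ : 1 < ρ) (n : ℕ) :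
    ∑ j ∈ Finset.range n, ((n - j : ℕ) : ℝ) ^ (-ρ) ≤ ∑' m : ℕ, ((m : ℝ) + 1) ^ (-ρ) := by
  have hsum : Summable fun m : ℕ => ((m : ℝ) + 1) ^ (-ρ) := by
    simpa using (summable_nat_add_iff 1).2 (summable_nat_rpow.2 (by linarith : -ρ < -1))
  rw [← Finset.sum_range_reflect]
  refine (Finset.sum_le_sum fun j hj => le_of_eq ?_).trans
    (hsum.sum_le_tsum _ fun m _ => rpow_nonneg (by positivity) _)
  rw [Finset.mem_range] at hj
  rw [show n - (n - 1 - j) = j + 1 by omega, Nat.cast_succ]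

noncomputable def branch (α x : ℝ) : ℝ := x * (1 + x ^ α)

noncomputable def branchDeriv (α x : ℝ) : ℝ := 1 + (α + 1) * x ^ α

/-- `f ^ (-n) (J₀)` in the paper's notation. -/
def cylinder (α x₁ : ℝ) (n : ℕ) : Set ℝ := {z | z ∈ Icc (0 : ℝ) 1 ∧ (MP α)^[n] z ∈ Ioc x₁ 1}

lemma MP_eq_ite (x : ℝ) :
    MP α x = if branch α x ≤ 1 then branch α x else branch α x - 1 := rfl

lemma Dfn_eq_prod (n : ℕ) (x : ℝ) :
    Dfn α n x = ∏ j ∈ Finset.range n, branchDeriv α ((MP α)^[j] x) := rfl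

lemma continuous_branch (hα : 0 < α) : Continuous (branch α) := by
  unfold branch
  have := Real.continuous_rpow_const (q := α) hα.le
  fun_prop

lemma branch_strictMonoOn (hα : 0 < α) : StrictMonoOn (branch α) (Ici 0) := by
  intro x hx y _ hxy
  have hx : 0 ≤ x := hx
  have : x ^ α ≤ y ^ α := rpow_le_rpow hx hxy.le hα.le
  unfold branch
  nlinarith [rpow_nonneg hx α]

lemma branch_nonneg {x : ℝ} (hx : 0 ≤ x) : 0 ≤ branch α x := by
  have := rpow_nonneg hx α
  unfold branch
  positivity

lemma branch_le_two_mul (hα : 0 < α) {x : ℝ} (hx : x ∈ Icc (0 : ℝ) 1) : branch α x ≤ 2 * x := by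
  have : x ^ α ≤ 1 := rpow_le_one hx.1 hx.2 hα.le
  unfold branch
  nlinarith [hx.1]

lemma MP_eq_branch (hα : 0 < α) (hfix : x₁ * (1 + x₁ ^ α) = 1) {x : ℝ} (hx : 0 ≤ x)
    (hxx₁ : x ≤ x₁) : MP α x = branch α x := by
  have h := (branch_strictMonoOn hα).monotoneOn hx (hx.trans hxx₁) hxx₁
  rw [show branch α x₁ = 1 from hfix] at h
  exact if_pos h

lemma one_lt_branch (hα : 0 < α) (hx₁ : x₁ ∈ Ioo (0 : ℝ) 1) (hfix : x₁ * (1 + x₁ ^ α) = 1)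
    {x : ℝ} (hx : x₁ < x) : 1 < branch α x :=
  hfix ▸ branch_strictMonoOn hα hx₁.1.le (hx₁.1.le.trans hx.le) hx

lemma MP_eq_branch_sub_one (hα : 0 < α) (hx₁ : x₁ ∈ Ioo (0 : ℝ) 1)
    (hfix : x₁ * (1 + x₁ ^ α) = 1) {x : ℝ} (hx : x₁ < x) : MP α x = branch α x - 1 :=
  if_neg (one_lt_branch hα hx₁ hfix hx).not_ge

lemma mapsTo_MP (hα : 0 < α) : MapsTo (MP α) (Icc 0 1) (Icc 0 1) := by
  intro x hx
  have h0 := branch_nonneg (α := α) hx.1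
  have h2 := branch_le_two_mul hα hx
  rw [MP_eq_ite]
  split_ifs <;> constructor <;> linarith [hx.2]

lemma iterate_mem_Icc (hα : 0 < α) {x : ℝ} (hx : x ∈ Icc (0 : ℝ) 1) (n : ℕ) :
    (MP α)^[n] x ∈ Icc (0 : ℝ) 1 :=
  (mapsTo_MP hα).iterate n hx

lemma MP_zero : MP α 0 = 0 := by
  simp [MP_eq_ite, branch]

lemma one_le_branchDeriv (hα : 0 < α) {x : ℝ} (hx : 0 ≤ x) : 1 ≤ branchDeriv α x := by
  unfold branchDeriv
  nlinarith [rpow_nonneg hx α]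

lemma one_le_Dfn (hα : 0 < α) {x : ℝ} (hx : x ∈ Icc (0 : ℝ) 1) (n : ℕ) : 1 ≤ Dfn α n x :=
  Finset.one_le_prod fun j _ => one_le_branchDeriv hα (iterate_mem_Icc hα hx j).1

lemma Dfn_add (k m : ℕ) (x : ℝ) :
    Dfn α (k + m) x = Dfn α k x * Dfn α m ((MP α)^[k] x) := by
  simp only [Dfn_eq_prod, Finset.prod_range_add]
  congr 1
  refine Finset.prod_congr rfl fun j _ => ?_
  rw [add_comm, Function.iterate_add_apply]

lemma Dfn_succ (n : ℕ) (x : ℝ) : Dfn α (n + 1) x = branchDeriv α x * Dfn α n (MP α x) := by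
  rw [add_comm, Dfn_add]
  simp [Dfn_eq_prod]

lemma branch_add_branchDeriv_mul_sub_le (hα : 0 < α) {z w : ℝ} (hz : 0 ≤ z) (hw : 0 ≤ w) :
    branch α z + branchDeriv α z * (w - z) ≤ branch α w := by
  have hself : ∀ {x : ℝ}, 0 ≤ x → x * x ^ α = x ^ (α + 1) := fun hx => by
    rw [rpow_add_one' hx (by linarith), mul_comm]
  rcases hz.eq_or_lt with rfl | hz
  · simp only [branch, branchDeriv, zero_rpow hα.ne']
    nlinarith [mul_nonneg hw (rpow_nonneg hw α)]
  have htangent := rpow_add_mul_sub_le (p := α + 1) (by linarith) hz hw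
  rw [add_sub_cancel_right] at htangent
  simp only [branch, branchDeriv, mul_add, mul_one, hself hz.le, hself hw]
  linarith

lemma mem_cylinder_succ (hα : 0 < α) {n : ℕ} {z : ℝ} :
    z ∈ cylinder α x₁ (n + 1) ↔ z ∈ Icc (0 : ℝ) 1 ∧ MP α z ∈ cylinder α x₁ n := by
  simp only [cylinder, Function.iterate_succ_apply]
  exact ⟨fun h => ⟨h.1, mapsTo_MP hα h.1, h.2⟩, fun h => ⟨h.1, h.2.2⟩⟩

lemma iterate_le_of_two_pow_mul_le (hα : 0 < α) (hx₁ : x₁ ∈ Ioo (0 : ℝ) 1)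
    (hfix : x₁ * (1 + x₁ ^ α) = 1) (m : ℕ) {s : ℝ} (hs : 0 ≤ s) (hsm : 2 ^ m * s ≤ x₁) :
    (MP α)^[m] s ≤ x₁ := by
  induction m generalizing s with
  | zero => simpa using hsm
  | succ m ih =>
    have hsx₁ : s ≤ x₁ := by nlinarith [one_le_pow₀ (M₀ := ℝ) one_le_two (n := m + 1)]
    have hbranch := branch_le_two_mul hα ⟨hs, hsx₁.trans hx₁.2.le⟩
    rw [Function.iterate_succ_apply, MP_eq_branch hα hfix hs hsx₁]
    refine ih (branch_nonneg hs) ?_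
    calc 2 ^ m * branch α s ≤ 2 ^ m * (2 * s) := by gcongr
      _ = 2 ^ (m + 1) * s := by ring
      _ ≤ x₁ := hsm

/-- Just to the right of `x₁` the map sends points next to the neutral fixed point `0`, from
where they cannot return to `J₀` in time. -/
lemma le_or_lt_of_Icc_subset_cylinder (hα : 0 < α) (hx₁ : x₁ ∈ Ioo (0 : ℝ) 1)
    (hfix : x₁ * (1 + x₁ ^ α) = 1) {n : ℕ} {z w : ℝ}
    (h : Icc z w ⊆ cylinder α x₁ (n + 1)) : w ≤ x₁ ∨ x₁ < z := by
  by_contra! hzw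
  obtain ⟨hwx₁, hzx₁⟩ := hzw
  have hbranch : Tendsto (branch α) (𝓝 x₁) (𝓝 1) := by
    simpa [show branch α x₁ = 1 from hfix] using (continuous_branch hα).tendsto x₁
  have hlim : Tendsto (fun t => 2 ^ n * (branch α t - 1)) (𝓝 x₁) (𝓝 0) := by
    simpa using (hbranch.sub_const 1).const_mul (2 ^ n)
  have hnear : ∀ᶠ t in 𝓝[>] x₁, t ∈ Ioc x₁ w := Ioc_mem_nhdsGT hwx₁
  obtain ⟨t, ⟨hxt, htw⟩, hsmall⟩ :=
    (hnear.and (nhdsWithin_le_nhds (hlim.eventually_lt_const hx₁.1))).exists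
  have hMP := MP_eq_branch_sub_one hα hx₁ hfix hxt
  have hreturn := ((mem_cylinder_succ hα).1 (h ⟨hzx₁.trans hxt.le, htw⟩)).2.2.1
  rw [hMP] at hreturn
  exact hreturn.not_ge <| iterate_le_of_two_pow_mul_le hα hx₁ hfix n
    (by linarith [one_lt_branch hα hx₁ hfix hxt]) hsmall.le

lemma exists_eqOn_branch_sub (hα : 0 < α) (hx₁ : x₁ ∈ Ioo (0 : ℝ) 1)
    (hfix : x₁ * (1 + x₁ ^ α) = 1) {n : ℕ} {z w : ℝ}
    (h : Icc z w ⊆ cylinder α x₁ (n + 1)) :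
    ∃ c : ℝ, EqOn (MP α) (fun t => branch α t - c) (Icc z w) := by
  rcases le_or_lt_of_Icc_subset_cylinder hα hx₁ hfix h with hw | hz
  · exact ⟨0, fun t ht => by
      simpa using MP_eq_branch hα hfix (h ht).1.1 (ht.2.trans hw)⟩
  · exact ⟨1, fun t ht => MP_eq_branch_sub_one hα hx₁ hfix (hz.trans_le ht.1)⟩

lemma Icc_subset_cylinder_succ (hα : 0 < α) (hx₁ : x₁ ∈ Ioo (0 : ℝ) 1)
    (hfix : x₁ * (1 + x₁ ^ α) = 1) {n : ℕ} {z w : ℝ} (hzw : z ≤ w)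
    (h : Icc z w ⊆ cylinder α x₁ (n + 1)) :
    branchDeriv α z * (w - z) ≤ MP α w - MP α z ∧ Icc (MP α z) (MP α w) ⊆ cylinder α x₁ n := by
  obtain ⟨c, hc⟩ := exists_eqOn_branch_sub hα hx₁ hfix h
  have hz := (h ⟨le_rfl, hzw⟩).1.1
  refine ⟨?_, fun y hy => ?_⟩
  · rw [hc ⟨le_rfl, hzw⟩, hc ⟨hzw, le_rfl⟩]
    linarith [branch_add_branchDeriv_mul_sub_le hα hz (hz.trans hzw)]
  · have hcont : ContinuousOn (MP α) (Icc z w) :=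
      ((continuous_branch hα).sub continuous_const).continuousOn.congr hc
    obtain ⟨t, ht, rfl⟩ := intermediate_value_Icc hzw hcont hy
    exact ((mem_cylinder_succ hα).1 (h ht)).2

lemma MP_le_MP_of_Icc_subset_cylinder (hα : 0 < α) (hx₁ : x₁ ∈ Ioo (0 : ℝ) 1)
    (hfix : x₁ * (1 + x₁ ^ α) = 1) {n : ℕ} {z w : ℝ} (hzw : z ≤ w)
    (h : Icc z w ⊆ cylinder α x₁ (n + 1)) : MP α z ≤ MP α w := by
  have := (Icc_subset_cylinder_succ hα hx₁ hfix hzw h).1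
  have := one_le_branchDeriv hα (h ⟨le_rfl, hzw⟩).1.1
  nlinarith

lemma Icc_iterate_subset_cylinder (hα : 0 < α) (hx₁ : x₁ ∈ Ioo (0 : ℝ) 1)
    (hfix : x₁ * (1 + x₁ ^ α) = 1) (j : ℕ) {m : ℕ} {z w : ℝ} (hzw : z ≤ w)
    (h : Icc z w ⊆ cylinder α x₁ (j + m)) :
    (MP α)^[j] z ≤ (MP α)^[j] w ∧ Icc ((MP α)^[j] z) ((MP α)^[j] w) ⊆ cylinder α x₁ m := by
  induction j generalizing z w with
  | zero => exact ⟨hzw, by simpa using h⟩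
  | succ j ih =>
    rw [add_right_comm] at h
    simp only [Function.iterate_succ_apply]
    exact ih (MP_le_MP_of_Icc_subset_cylinder hα hx₁ hfix hzw h)
      (Icc_subset_cylinder_succ hα hx₁ hfix hzw h).2

lemma Dfn_mul_sub_le (hα : 0 < α) (hx₁ : x₁ ∈ Ioo (0 : ℝ) 1)
    (hfix : x₁ * (1 + x₁ ^ α) = 1) (n : ℕ) {z w : ℝ} (hzw : z ≤ w)
    (h : Icc z w ⊆ cylinder α x₁ n) :
    Dfn α n z * (w - z) ≤ (MP α)^[n] w - (MP α)^[n] z := by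
  induction n generalizing z w with
  | zero => simp [Dfn]
  | succ n ih =>
    obtain ⟨hexpand, hsub⟩ := Icc_subset_cylinder_succ hα hx₁ hfix hzw h
    have hMPz := ((mem_cylinder_succ hα).1 (h ⟨le_rfl, hzw⟩)).2.1
    have hD := one_le_Dfn hα hMPz n
    rw [Dfn_succ]
    calc branchDeriv α z * Dfn α n (MP α z) * (w - z)
        = Dfn α n (MP α z) * (branchDeriv α z * (w - z)) := by ring
      _ ≤ Dfn α n (MP α z) * (MP α w - MP α z) := by gcongr
      _ ≤ (MP α)^[n] (MP α w) - (MP α)^[n] (MP α z) :=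
        ih (MP_le_MP_of_Icc_subset_cylinder hα hx₁ hfix hzw h) hsub

lemma rpow_branch {y : ℝ} (hy : 0 ≤ y) :
    branch α y ^ α = y ^ α * (1 + y ^ α) ^ α :=
  mul_rpow hy (by linarith [rpow_nonneg hy α])

lemma half_mul_sq_le_rpow_branch_sub (hα : 0 < α) {y : ℝ} (hy : y ∈ Icc (0 : ℝ) 1) :
    α / 2 * (y ^ α) ^ 2 ≤ branch α y ^ α - y ^ α := by
  have ht0 := rpow_nonneg hy.1 α
  have ht1 : y ^ α ≤ 1 := rpow_le_one hy.1 hy.2 hα.le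
  have hgrowth := one_add_mul_div_le_one_add_rpow hα.le ht0
  have hhalf : y ^ α / 2 ≤ y ^ α / (1 + y ^ α) :=
    div_le_div_of_nonneg_left ht0 (by linarith) (by linarith)
  rw [rpow_branch hy.1]
  nlinarith [mul_le_mul_of_nonneg_left hhalf (mul_nonneg hα.le ht0)]

lemma rpow_branch_le (hα : 0 < α) {y : ℝ} (hy : y ∈ Icc (0 : ℝ) 1) :
    branch α y ^ α ≤ 2 ^ α * y ^ α := by
  have ht0 := rpow_nonneg hy.1 α
  have ht1 : y ^ α ≤ 1 := rpow_le_one hy.1 hy.2 hα.le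
  rw [rpow_branch hy.1, mul_comm]
  gcongr
  linarith

lemma inv_rpow_branch_add_le (hα : 0 < α) {y : ℝ} (hy : y ∈ Ioc (0 : ℝ) 1) :
    (branch α y ^ α)⁻¹ + α / 2 / 2 ^ α ≤ (y ^ α)⁻¹ := by
  have ht : 0 < y ^ α := rpow_pos_of_pos hy.1 α
  have h1 := half_mul_sq_le_rpow_branch_sub hα (Ioc_subset_Icc_self hy)
  have h2 := rpow_branch_le hα (Ioc_subset_Icc_self hy)
  have h2α : 0 < (2 : ℝ) ^ α := by positivity
  have ht' : 0 < branch α y ^ α := by linarith [mul_nonneg hα.le (sq_nonneg (y ^ α))]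
  rw [← le_sub_iff_add_le', inv_sub_inv ht.ne' ht'.ne', le_div_iff₀ (by positivity),
    div_div, div_mul_eq_mul_div, div_le_iff₀ (by positivity)]
  nlinarith [mul_le_mul_of_nonneg_left h2 (mul_nonneg hα.le (sq_nonneg (y ^ α)))]

lemma branch_rpow_le (hα : 0 < α) {y : ℝ} (hy : 0 ≤ y) :
    branch α y ^ (α + 1) ≤ y ^ (α + 1) * (branchDeriv α y * exp ((α + 1) ^ 2 * (y ^ α) ^ 2)) := by
  rw [branch, mul_rpow hy (by linarith [rpow_nonneg hy α])]
  exact mul_le_mul_of_nonneg_left (one_add_rpow_le_mul_exp (by linarith) (rpow_nonneg hy α))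
    (rpow_nonneg hy _)

lemma iterate_succ_eq_branch (hα : 0 < α) (hfix : x₁ * (1 + x₁ ^ α) = 1) {z : ℝ}
    (hz : z ∈ Icc (0 : ℝ) 1) {j : ℕ} (hj : (MP α)^[j] z ≤ x₁) :
    (MP α)^[j + 1] z = branch α ((MP α)^[j] z) := by
  rw [Function.iterate_succ_apply', MP_eq_branch hα hfix (iterate_mem_Icc hα hz j).1 hj]

lemma sum_sq_rpow_iterate_le (hα : 0 < α) (hfix : x₁ * (1 + x₁ ^ α) = 1) {z : ℝ}
    (hz : z ∈ Icc (0 : ℝ) 1) {k : ℕ} (hlow : ∀ j < k, (MP α)^[j] z ≤ x₁) :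
    ∑ j ∈ Finset.range k, (((MP α)^[j] z) ^ α) ^ 2 ≤ 2 / α := by
  have hstep : ∀ j ∈ Finset.range k, α / 2 * (((MP α)^[j] z) ^ α) ^ 2 ≤
      ((MP α)^[j + 1] z) ^ α - ((MP α)^[j] z) ^ α := fun j hj => by
    rw [iterate_succ_eq_branch hα hfix hz (hlow j (Finset.mem_range.1 hj))]
    exact half_mul_sq_le_rpow_branch_sub hα (iterate_mem_Icc hα hz j)
  have hsum := Finset.sum_le_sum hstep
  rw [← Finset.mul_sum, Finset.sum_range_sub (fun j => ((MP α)^[j] z) ^ α)] at hsum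
  have hk := iterate_mem_Icc hα hz k
  have : ((MP α)^[k] z) ^ α ≤ 1 := rpow_le_one hk.1 hk.2 hα.le
  rw [le_div_iff₀ hα]
  simp only [Function.iterate_zero_apply] at hsum
  nlinarith [rpow_nonneg hz.1 α]

lemma mul_le_inv_rpow_of_iterate_le (hα : 0 < α) (hfix : x₁ * (1 + x₁ ^ α) = 1) (k : ℕ) {z : ℝ}
    (hz : z ∈ Ioc (0 : ℝ) 1) (hlow : ∀ j < k, (MP α)^[j] z ≤ x₁) :
    α / 2 / 2 ^ α * k ≤ (z ^ α)⁻¹ := by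
  induction k generalizing z with
  | zero => simpa using (rpow_pos_of_pos hz.1 α).le
  | succ k ih =>
    have hzx₁ : z ≤ x₁ := hlow 0 k.succ_pos
    have hMPz : MP α z = branch α z := MP_eq_branch hα hfix hz.1.le hzx₁
    have hpos : 0 < MP α z := by
      rw [hMPz, branch]
      have := rpow_nonneg hz.1.le α
      nlinarith [hz.1]
    have hnext := ih ⟨hpos, (mapsTo_MP hα (Ioc_subset_Icc_self hz)).2⟩
      fun j hj => hlow (j + 1) (by omega)
    have hstep := inv_rpow_branch_add_le hα hz
    rw [← hMPz] at hstep
    push_cast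
    linarith

lemma iterate_rpow_le_mul_Dfn_mul_exp (hα : 0 < α) (hfix : x₁ * (1 + x₁ ^ α) = 1) {z : ℝ}
    (hz : z ∈ Icc (0 : ℝ) 1) (k : ℕ) (hlow : ∀ j < k, (MP α)^[j] z ≤ x₁) :
    ((MP α)^[k] z) ^ (α + 1) ≤ z ^ (α + 1) * Dfn α k z *
      exp ((α + 1) ^ 2 * ∑ j ∈ Finset.range k, (((MP α)^[j] z) ^ α) ^ 2) := by
  induction k with
  | zero => simp [Dfn]
  | succ k ih =>
    have hk := iterate_mem_Icc hα hz k
    rw [iterate_succ_eq_branch hα hfix hz (hlow k k.lt_succ_self), Finset.sum_range_succ,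
      mul_add, exp_add, Dfn_eq_prod, Finset.prod_range_succ, ← Dfn_eq_prod]
    calc branch α ((MP α)^[k] z) ^ (α + 1)
        ≤ ((MP α)^[k] z) ^ (α + 1) * (branchDeriv α ((MP α)^[k] z) *
            exp ((α + 1) ^ 2 * (((MP α)^[k] z) ^ α) ^ 2)) := branch_rpow_le hα hk.1
      _ ≤ z ^ (α + 1) * Dfn α k z *
            exp ((α + 1) ^ 2 * ∑ j ∈ Finset.range k, (((MP α)^[j] z) ^ α) ^ 2) *
            (branchDeriv α ((MP α)^[k] z) * exp ((α + 1) ^ 2 * (((MP α)^[k] z) ^ α) ^ 2)) := by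
          gcongr
          · exact mul_nonneg (by linarith [one_le_branchDeriv hα hk.1]) (exp_pos _).le
          · exact ih fun j hj => hlow j (by omega)
      _ = _ := by ring

lemma one_add_mul_rpow_le_Dfn (hα : 0 < α) {z s : ℝ} (hz : z ∈ Icc (0 : ℝ) 1) (hs : 0 ≤ s)
    {j k : ℕ} (hjk : j < k) (hj : s ≤ (MP α)^[j] z) : 1 + (α + 1) * s ^ α ≤ Dfn α k z := by
  have hrest : 1 ≤ ∏ i ∈ (Finset.range k).erase j, branchDeriv α ((MP α)^[i] z) :=
    Finset.one_le_prod fun i _ => one_le_branchDeriv hα (iterate_mem_Icc hα hz i).1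
  have hfactor : 1 + (α + 1) * s ^ α ≤ branchDeriv α ((MP α)^[j] z) := by
    unfold branchDeriv
    gcongr
  rw [Dfn_eq_prod, ← Finset.mul_prod_erase _ _ (Finset.mem_range.2 hjk)]
  have hB := one_le_branchDeriv hα (iterate_mem_Icc hα hz j).1
  exact hfactor.trans (le_mul_of_one_le_right (by linarith) hrest)

/-- An excursion near the neutral fixed point that starts at `z` and returns to `J₀` after `k`
steps has `k ≲ z ^ (-α)`, while the derivative along it is `≳ z ^ (-(α + 1))`. -/
lemma mul_rpow_le_Dfn_of_exit (hα : 0 < α) (hx₁ : x₁ ∈ Ioo (0 : ℝ) 1)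
    (hfix : x₁ * (1 + x₁ ^ α) = 1) {z : ℝ} (hz : z ∈ Icc (0 : ℝ) 1) {k : ℕ}
    (hlow : ∀ j < k, (MP α)^[j] z ≤ x₁) (hexit : x₁ < (MP α)^[k] z) :
    x₁ ^ (α + 1) * exp (-((α + 1) ^ 2 * (2 / α))) * (α / 2 / 2 ^ α * k) ^ (1 / α + 1) ≤
      Dfn α k z := by
  have hz0 : 0 < z := by
    refine hz.1.lt_of_ne fun h => ?_
    rw [← h, Function.iterate_fixed MP_zero] at hexit
    exact hx₁.1.not_gt hexit
  have hescape : (α / 2 / 2 ^ α * k) ^ (1 / α + 1) ≤ (z ^ (α + 1))⁻¹ := by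
    have h := mul_le_inv_rpow_of_iterate_le hα hfix k ⟨hz0, hz.2⟩ hlow
    calc (α / 2 / 2 ^ α * k) ^ (1 / α + 1) ≤ ((z ^ α)⁻¹) ^ (1 / α + 1) := by gcongr
      _ = (z ^ (α + 1))⁻¹ := by
        rw [inv_rpow (rpow_nonneg hz.1 _), ← rpow_mul hz.1, mul_add, mul_one_div_cancel hα.ne',
          add_comm, mul_one]
  have hexpand : x₁ ^ (α + 1) ≤ z ^ (α + 1) * Dfn α k z * exp ((α + 1) ^ 2 * (2 / α)) :=
    calc x₁ ^ (α + 1) ≤ ((MP α)^[k] z) ^ (α + 1) := by gcongr; exact hx₁.1.le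
      _ ≤ z ^ (α + 1) * Dfn α k z *
          exp ((α + 1) ^ 2 * ∑ j ∈ Finset.range k, (((MP α)^[j] z) ^ α) ^ 2) :=
        iterate_rpow_le_mul_Dfn_mul_exp hα hfix hz k hlow
      _ ≤ z ^ (α + 1) * Dfn α k z * exp ((α + 1) ^ 2 * (2 / α)) := by
        have := one_le_Dfn hα hz k
        gcongr
        exact sum_sq_rpow_iterate_le hα hfix hz hlow
  have hzpow : 0 < z ^ (α + 1) := rpow_pos_of_pos hz0 _
  calc x₁ ^ (α + 1) * exp (-((α + 1) ^ 2 * (2 / α))) * (α / 2 / 2 ^ α * k) ^ (1 / α + 1)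
      ≤ x₁ ^ (α + 1) * exp (-((α + 1) ^ 2 * (2 / α))) * (z ^ (α + 1))⁻¹ :=
        mul_le_mul_of_nonneg_left hescape (mul_nonneg (rpow_nonneg hx₁.1.le _) (exp_pos _).le)
    _ ≤ Dfn α k z := by
      rw [exp_neg, ← div_eq_mul_inv, ← div_eq_mul_inv, div_div, div_le_iff₀ (by positivity)]
      linarith

def ExpandsAtRate (α x₁ ε : ℝ) : Prop :=
  ∀ (n : ℕ) (z : ℝ), z ∈ Icc (0 : ℝ) 1 → x₁ < (MP α)^[n] z →
    (1 + ε * n) ^ (1 / α + 1) ≤ Dfn α n z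

lemma exists_block_expansion (hα : 0 < α) (hx₁ : x₁ ∈ Ioo (0 : ℝ) 1)
    (hfix : x₁ * (1 + x₁ ^ α) = 1) :
    ∃ c > 0, ∀ (n : ℕ) (z : ℝ), z ∈ Icc (0 : ℝ) 1 → x₁ < (MP α)^[n] z → 1 ≤ n →
      ∃ k, 1 ≤ k ∧ k ≤ n ∧ (1 + c * k) ^ (1 / α + 1) ≤ Dfn α k z := by
  have hx₁0 := hx₁.1
  obtain ⟨c, hc, hcD⟩ := exists_one_add_mul_rpow_le (p := 1 / α + 1) (δ := (α + 1) * (x₁ / 2) ^ α)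
    (a := x₁ ^ (α + 1) * exp (-((α + 1) ^ 2 * (2 / α)))) (b := α / 2 / 2 ^ α)
    (by positivity) (by positivity) (by positivity) (by positivity)
  refine ⟨c, hc, fun n z hz hn hn1 => ?_⟩
  by_cases hzx₁ : x₁ < z
  · refine ⟨1, le_rfl, hn1, ?_⟩
    rw [Nat.cast_one]
    refine hcD 1 _ le_rfl ?_ ?_
    · exact one_add_mul_rpow_le_Dfn hα hz (by positivity) (j := 0) one_pos
        (by show x₁ / 2 ≤ z; linarith)
    · rw [sub_self, mul_zero, zero_rpow (by positivity), mul_zero]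
      linarith [one_le_Dfn hα hz 1]
  classical
  have hex : ∃ m, x₁ < (MP α)^[m] z := ⟨n, hn⟩
  set k := Nat.find hex
  have hexit : x₁ < (MP α)^[k] z := Nat.find_spec hex
  have hlow : ∀ j < k, (MP α)^[j] z ≤ x₁ := fun j hj => not_lt.1 (Nat.find_min hex hj)
  obtain ⟨j, hj⟩ : ∃ j, k = j + 1 :=
    Nat.exists_eq_succ_of_ne_zero fun h => hzx₁ (by simpa [h] using hexit)
  have hlast : x₁ / 2 ≤ (MP α)^[j] z := by
    have := branch_le_two_mul hα (iterate_mem_Icc hα hz j)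
    rw [hj, iterate_succ_eq_branch hα hfix hz (hlow j (by omega))] at hexit
    linarith
  refine ⟨k, by omega, Nat.find_min' hex hn, hcD k _ (by norm_cast; omega)
    (one_add_mul_rpow_le_Dfn hα hz (by positivity) (by omega) hlast) ?_⟩
  calc x₁ ^ (α + 1) * exp (-((α + 1) ^ 2 * (2 / α))) * (α / 2 / 2 ^ α * (k - 1)) ^ (1 / α + 1)
      ≤ x₁ ^ (α + 1) * exp (-((α + 1) ^ 2 * (2 / α))) * (α / 2 / 2 ^ α * k) ^ (1 / α + 1) := by
        have : (1 : ℝ) ≤ k := by norm_cast; omega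
        gcongr
        linarith
    _ ≤ Dfn α k z := mul_rpow_le_Dfn_of_exit hα hx₁ hfix hz hlow hexit

lemma exists_growth (hα : 0 < α) (hx₁ : x₁ ∈ Ioo (0 : ℝ) 1) (hfix : x₁ * (1 + x₁ ^ α) = 1) :
    ∃ ε ∈ Ioo (0 : ℝ) 1, ExpandsAtRate α x₁ ε := by
  obtain ⟨c, hc, hblock⟩ := exists_block_expansion hα hx₁ hfix
  set ε := min c (1 / 2)
  have hε : 0 < ε := by positivity
  refine ⟨ε, ⟨hε, by linarith [min_le_right c (1 / 2)]⟩, fun n => ?_⟩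
  induction n using Nat.strong_induction_on with
  | _ n ih =>
  intro z hz hn
  rcases Nat.eq_zero_or_pos n with rfl | hn1
  · simp [Dfn]
  obtain ⟨k, hk1, hkn, hk⟩ := hblock n z hz hn hn1
  obtain ⟨m, rfl⟩ := Nat.exists_eq_add_of_le hkn
  have hrest := ih m (by omega) ((MP α)^[k] z) (iterate_mem_Icc hα hz k)
    (by rwa [← Function.iterate_add_apply, add_comm])
  have hεc : ε ≤ c := min_le_left _ _
  rw [Dfn_add]
  calc (1 + ε * ((k + m : ℕ) : ℝ)) ^ (1 / α + 1)
      ≤ ((1 + c * k) * (1 + ε * m)) ^ (1 / α + 1) := by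
        gcongr
        push_cast
        nlinarith [mul_nonneg (mul_nonneg hc.le hε.le) (mul_nonneg k.cast_nonneg m.cast_nonneg),
          mul_le_mul_of_nonneg_right hεc k.cast_nonneg]
    _ = (1 + c * k) ^ (1 / α + 1) * (1 + ε * m) ^ (1 / α + 1) :=
        mul_rpow (by positivity) (by positivity)
    _ ≤ Dfn α k z * Dfn α m ((MP α)^[k] z) :=
        mul_le_mul hk hrest (by positivity) (by linarith [one_le_Dfn hα hz k])

lemma sub_le_of_Icc_subset_cylinder (hα : 0 < α) (hx₁ : x₁ ∈ Ioo (0 : ℝ) 1)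
    (hfix : x₁ * (1 + x₁ ^ α) = 1) {ε : ℝ} (hε : 0 ≤ ε) (hgrowth : ExpandsAtRate α x₁ ε)
    {n : ℕ} {z w : ℝ} (hzw : z ≤ w) (h : Icc z w ⊆ cylinder α x₁ n) :
    w - z ≤ (1 - x₁) / (1 + ε * n) ^ (1 / α + 1) := by
  have hz := h ⟨le_rfl, hzw⟩
  have hw := h ⟨hzw, le_rfl⟩
  have hexpand := Dfn_mul_sub_le hα hx₁ hfix n hzw h
  have hD := hgrowth n z hz.1 hz.2.1
  rw [le_div_iff₀ (by positivity)]
  nlinarith [hw.2.2, hz.2.1]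

lemma dist_le_of_isPreconnected (hα : 0 < α) (hx₁ : x₁ ∈ Ioo (0 : ℝ) 1)
    (hfix : x₁ * (1 + x₁ ^ α) = 1) {ε : ℝ} (hε : 0 ≤ ε) (hgrowth : ExpandsAtRate α x₁ ε)
    {n : ℕ} {J : Set ℝ} (hJ : IsPreconnected J) (hJsub : J ⊆ cylinder α x₁ n) {z w : ℝ}
    (hz : z ∈ J) (hw : w ∈ J) : dist z w ≤ (1 - x₁) / (1 + ε * n) ^ (1 / α + 1) := by
  wlog hzw : z ≤ w generalizing z w
  · rw [dist_comm]
    exact this hw hz (le_of_not_ge hzw)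
  rw [dist_comm, Real.dist_eq, abs_of_nonneg (sub_nonneg.2 hzw)]
  exact sub_le_of_Icc_subset_cylinder hα hx₁ hfix hε hgrowth hzw
    ((hJ.ordConnected.out hz hw).trans hJsub)

lemma Dfn_le_Dfn_mul_exp (hα : 0 < α) {n : ℕ} {z w : ℝ} (hz : z ∈ Icc (0 : ℝ) 1)
    (hw : w ∈ Icc (0 : ℝ) 1) {d : ℕ → ℝ}
    (hd : ∀ j < n, |((MP α)^[j] w) ^ α - ((MP α)^[j] z) ^ α| ≤ d j) :
    Dfn α n w ≤ Dfn α n z * exp ((α + 1) * ∑ j ∈ Finset.range n, d j) := by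
  rw [Finset.mul_sum, exp_sum, Dfn_eq_prod, Dfn_eq_prod, ← Finset.prod_mul_distrib]
  refine Finset.prod_le_prod (fun j _ => ?_) fun j hj => ?_
  · linarith [one_le_branchDeriv hα (iterate_mem_Icc hα hw j).1]
  have hdj := (le_abs_self _).trans (hd j (Finset.mem_range.1 hj))
  have hdj0 := (abs_nonneg _).trans (hd j (Finset.mem_range.1 hj))
  have hB := one_le_branchDeriv hα (iterate_mem_Icc hα hz j).1
  have hexp := add_one_le_exp ((α + 1) * d j)
  calc branchDeriv α ((MP α)^[j] w)
      ≤ branchDeriv α ((MP α)^[j] z) * (1 + (α + 1) * d j) := by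
        unfold branchDeriv at hB ⊢
        nlinarith [mul_nonneg (mul_nonneg (by linarith : (0 : ℝ) ≤ α + 1) hdj0) (sub_nonneg.2 hB)]
    _ ≤ branchDeriv α ((MP α)^[j] z) * exp ((α + 1) * d j) := by gcongr; linarith

lemma abs_rpow_iterate_sub_le (hα : 0 < α) (hx₁ : x₁ ∈ Ioo (0 : ℝ) 1)
    (hfix : x₁ * (1 + x₁ ^ α) = 1) {ε : ℝ} (hε : 0 < ε) (hgrowth : ExpandsAtRate α x₁ ε)
    {n : ℕ} {z w : ℝ} (hzw : z ≤ w) (h : Icc z w ⊆ cylinder α x₁ n) {j : ℕ} (hj : j < n) :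
    |((MP α)^[j] w) ^ α - ((MP α)^[j] z) ^ α| ≤
      max α 1 * ε ^ (-((1 / α + 1) * min α 1)) *
        ((n - j : ℕ) : ℝ) ^ (-((1 / α + 1) * min α 1)) := by
  obtain ⟨hle, hsub⟩ := Icc_iterate_subset_cylinder hα hx₁ hfix j (m := n - j) hzw
    (by rwa [Nat.add_sub_cancel' hj.le])
  have hm : (0 : ℝ) < ((n - j : ℕ) : ℝ) := by exact_mod_cast Nat.sub_pos_of_lt hj
  have hz := (hsub ⟨le_rfl, hle⟩).1
  have hw := (hsub ⟨hle, le_rfl⟩).1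
  have hclose : (MP α)^[j] w - (MP α)^[j] z ≤ (ε * (n - j : ℕ)) ^ (-(1 / α + 1)) := by
    refine (sub_le_of_Icc_subset_cylinder hα hx₁ hfix hε.le hgrowth hle hsub).trans ?_
    rw [rpow_neg (by positivity), inv_eq_one_div]
    exact div_le_div₀ zero_le_one (by linarith [hx₁.1]) (by positivity)
      (rpow_le_rpow (by positivity) (by linarith) (by positivity))
  rw [abs_of_nonneg (sub_nonneg.2 (rpow_le_rpow hz.1 hle hα.le))]
  calc ((MP α)^[j] w) ^ α - ((MP α)^[j] z) ^ α
      ≤ max α 1 * ((MP α)^[j] w - (MP α)^[j] z) ^ min α 1 := rpow_sub_rpow_le hα hz.1 hle hw.2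
    _ ≤ max α 1 * ((ε * (n - j : ℕ)) ^ (-(1 / α + 1))) ^ min α 1 := by
        gcongr
    _ = _ := by
        rw [← rpow_mul (by positivity), mul_rpow hε.le hm.le, neg_mul, mul_assoc]

lemma one_lt_mul_min (hα : 0 < α) : 1 < (1 / α + 1) * min α 1 := by
  rcases le_total α 1 with hα1 | hα1
  · rw [min_eq_left hα1, add_mul, one_div_mul_cancel hα.ne']
    linarith
  · rw [min_eq_right hα1, mul_one]
    linarith [one_div_pos.2 hα]

lemma exists_Dfn_le_mul_Dfn (hα : 0 < α) (hx₁ : x₁ ∈ Ioo (0 : ℝ) 1)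
    (hfix : x₁ * (1 + x₁ ^ α) = 1) {ε : ℝ} (hε : 0 < ε) (hgrowth : ExpandsAtRate α x₁ ε) :
    ∃ C, ∀ (n : ℕ) (J : Set ℝ), IsPreconnected J → J ⊆ cylinder α x₁ n →
      ∀ z ∈ J, ∀ w ∈ J, Dfn α n z ≤ C * Dfn α n w := by
  set ρ := (1 / α + 1) * min α 1
  set K := max α 1 * ε ^ (-ρ)
  have hK : 0 ≤ K := mul_nonneg (le_max_of_le_right zero_le_one) (rpow_nonneg hε.le _)
  refine ⟨exp ((α + 1) * (K * ∑' m : ℕ, ((m : ℝ) + 1) ^ (-ρ))),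
    fun n J hJ hJsub z hz w hw => ?_⟩
  have hclose : ∀ j < n, |((MP α)^[j] z) ^ α - ((MP α)^[j] w) ^ α| ≤
      K * ((n - j : ℕ) : ℝ) ^ (-ρ) := fun j hj => by
    rcases le_total z w with hzw | hwz
    · rw [abs_sub_comm]
      exact abs_rpow_iterate_sub_le hα hx₁ hfix hε hgrowth hzw
        ((hJ.ordConnected.out hz hw).trans hJsub) hj
    · exact abs_rpow_iterate_sub_le hα hx₁ hfix hε hgrowth hwz
        ((hJ.ordConnected.out hw hz).trans hJsub) hj
  have hsum : ∑ j ∈ Finset.range n, K * ((n - j : ℕ) : ℝ) ^ (-ρ) ≤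
      K * ∑' m : ℕ, ((m : ℝ) + 1) ^ (-ρ) := by
    rw [← Finset.mul_sum]
    exact mul_le_mul_of_nonneg_left (sum_range_natCast_sub_rpow_le_tsum (one_lt_mul_min hα) n) hK
  calc Dfn α n z ≤ Dfn α n w * exp ((α + 1) * ∑ j ∈ Finset.range n, K * ((n - j : ℕ) : ℝ) ^ (-ρ)) :=
        Dfn_le_Dfn_mul_exp hα (hJsub hw).1 (hJsub hz).1 hclose
    _ ≤ Dfn α n w * exp ((α + 1) * (K * ∑' m : ℕ, ((m : ℝ) + 1) ^ (-ρ))) := by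
        have := one_le_Dfn hα (hJsub hw).1 n
        gcongr
    _ = _ := mul_comm _ _

lemma inv_le_div_and_div_le {a b C : ℝ} (ha : 0 < a) (hb : 0 < b) (hab : a ≤ C * b)
    (hba : b ≤ C * a) : C⁻¹ ≤ a / b ∧ a / b ≤ C := by
  have hC : 0 < C := pos_of_mul_pos_left (ha.trans_le hab) hb.le
  rw [inv_le_comm₀ hC (div_pos ha hb), inv_div, div_le_iff₀ ha, div_le_iff₀ hb]
  exact ⟨hba, hab⟩

end MannevillePomeau

open MannevillePomeau

theorem stmt5 (α : ℝ) (hα : 0 < α) (x₁ : ℝ) (hx₁ : x₁ ∈ Set.Ioo (0:ℝ) 1)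
    (hfix : x₁ * (1 + x₁ ^ α) = 1) :
    ∃ ε₁ ∈ Set.Ioo (0:ℝ) 1, ∃ C₁ > (1:ℝ),
      ∀ n : ℕ, 1 ≤ n → ∀ J : Set ℝ,
        J.Nonempty → IsPreconnected J →
        J ⊆ {z | z ∈ Set.Icc (0:ℝ) 1 ∧ (MP α)^[n] z ∈ Set.Ioc x₁ 1} →
        (∀ J' : Set ℝ, IsPreconnected J' → J ⊆ J' →
          J' ⊆ {z | z ∈ Set.Icc (0:ℝ) 1 ∧ (MP α)^[n] z ∈ Set.Ioc x₁ 1} → J' = J) →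
        Metric.diam J ≤ (1 - x₁) / (1 + ε₁ * n) ^ (1/α + 1) ∧
        (∀ z ∈ J, (1 + ε₁ * n) ^ (1/α + 1) ≤ Dfn α n z) ∧
        (∀ z ∈ J, ∀ w ∈ J, C₁⁻¹ ≤ Dfn α n z / Dfn α n w ∧ Dfn α n z / Dfn α n w ≤ C₁) := by
  obtain ⟨ε, hε, hgrowth⟩ := exists_growth hα hx₁ hfix
  obtain ⟨C, hC⟩ := exists_Dfn_le_mul_Dfn hα hx₁ hfix hε.1 hgrowth
  refine ⟨ε, hε, max C 2, lt_max_of_lt_right one_lt_two, fun n _ J _ hJ hJsub _ => ⟨?_, ?_, ?_⟩⟩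
  · exact Metric.diam_le_of_forall_dist_le (div_nonneg (by linarith [hx₁.2])
      (rpow_nonneg (by nlinarith [hε.1, n.cast_nonneg (α := ℝ)]) _))
      fun z hz w hw => dist_le_of_isPreconnected hα hx₁ hfix hε.1.le hgrowth hJ hJsub hz hw
  · exact fun z hz => hgrowth n z (hJsub hz).1 (hJsub hz).2.1
  have hC₁ : ∀ z ∈ J, ∀ w ∈ J, Dfn α n z ≤ max C 2 * Dfn α n w := fun z hz w hw =>
    (hC n J hJ hJsub z hz w hw).trans <| by
      gcongr
      · linarith [one_le_Dfn hα (hJsub hw).1 n]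
      · exact le_max_left C 2
  exact fun z hz w hw => inv_le_div_and_div_le (by linarith [one_le_Dfn hα (hJsub hz).1 n])
    (by linarith [one_le_Dfn hα (hJsub hw).1 n]) (hC₁ z hz w hw) (hC₁ w hw z hz)
end

section
/- Let γ > 0 and let φ : [0,1] → ℝ be continuous with continuous derivative on (0,1]. Then the limit c = lim_{x→0⁺} φ'(x)/(γ x^{γ−1}) exists in ℝ if and only if there exist c ∈ ℝ and a function h, continuous on [0,1] and continuously differentiable on (0,1], such that φ(x) = φ(0) + c x^γ + h(x) x^γ for all x ∈ [0,1], h(0) = 0, and lim_{x→0⁺} h'(x)x = 0. Moreover in that case c and h are unique and c = lim_{x→0⁺} φ'(x)/(γ x^{γ−1}). -/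
open Real Set Filter Topology

/-!
For `z > 0` the decomposition determines `h z = (φ z - φ 0) / z ^ γ - c`, so uniqueness is free.
Differentiating the decomposition gives, for `z > 0`,
`φ' z / (γ * z ^ (γ - 1)) = c + h z + h' z * z / γ`.
If the decomposition exists, `h z → 0` by continuity and `h' z * z → 0` by assumption, so the
quotient tends to `c`. Conversely, if the quotient tends to `c`, L'Hôpital's rule gives
`(φ z - φ 0) / z ^ γ → c`, i.e. `h z → 0`, and the same identity then forces `h' z * z → 0`.
-/

theorem continuousOn_Icc_iff_continuousOn_Ioc_and_tendsto {α β : Type*} [LinearOrder α]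
    [TopologicalSpace α] [OrderTopology α] [TopologicalSpace β] {f : α → β} {a b : α}
    (hab : a < b) :
    ContinuousOn f (Icc a b) ↔ ContinuousOn f (Ioc a b) ∧ Tendsto f (𝓝[>] a) (𝓝 (f a)) := by
  rw [← nhdsWithin_Ioc_eq_nhdsGT hab, ← ContinuousWithinAt, ← Ioc_insert_left hab.le]
  refine ⟨fun hf => ⟨hf.mono (subset_insert _ _), (hf a (mem_insert _ _)).of_insert⟩, ?_⟩
  rintro ⟨hf, ha⟩ x (rfl | hx)
  · exact ha.insert
  · exact (hf x hx).insert'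

theorem div_deriv_rpow_eq_of_eventuallyEq {γ a c z φ' h' : ℝ} {φ h : ℝ → ℝ} (hγ : γ ≠ 0)
    (hz : 0 < z) (hφ : HasDerivAt φ φ' z) (hh : HasDerivAt h h' z)
    (heq : φ =ᶠ[𝓝 z] fun x => a + c * x ^ γ + h x * x ^ γ) :
    φ' / (γ * z ^ (γ - 1)) = c + h z + h' * z / γ := by
  have hrpow := hasDerivAt_rpow_const (p := γ) (Or.inl hz.ne')
  have hφ' : φ' = c * (γ * z ^ (γ - 1)) + (h' * z ^ γ + h z * (γ * z ^ (γ - 1))) :=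
    hφ.unique <| (((hrpow.const_mul c).const_add a).add (hh.mul hrpow)).congr_of_eventuallyEq heq
  rw [hφ', rpow_sub_one hz.ne']
  have := (rpow_pos_of_pos hz γ).ne'
  field_simp
  ring

/-- The `h` of the decomposition `φ z = φ 0 + c * z ^ γ + h z * z ^ γ`; at `z = 0` it is `0 / 0 = 0`,
which is exactly the normalization `h 0 = 0`. -/
noncomputable def rpowRemainder (γ c : ℝ) (φ : ℝ → ℝ) (z : ℝ) : ℝ :=
  (φ z - φ 0 - c * z ^ γ) / z ^ γ

section

variable {γ c : ℝ} {φ φ' : ℝ → ℝ}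

theorem rpowRemainder_zero (hγ : γ ≠ 0) : rpowRemainder γ c φ 0 = 0 := by
  simp [rpowRemainder, zero_rpow hγ]

theorem eq_add_rpowRemainder_mul (hγ : γ ≠ 0) {z : ℝ} (hz : 0 ≤ z) :
    φ z = φ 0 + c * z ^ γ + rpowRemainder γ c φ z * z ^ γ := by
  rcases hz.eq_or_lt with rfl | hz
  · simp [zero_rpow hγ]
  · have := (rpow_pos_of_pos hz γ).ne'
    rw [rpowRemainder]
    field_simp
    ring

theorem eq_rpowRemainder_of_eq_add_mul (hγ : γ ≠ 0) {h : ℝ → ℝ} (h0 : h 0 = 0) {z : ℝ}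
    (hz : 0 ≤ z) (heq : φ z = φ 0 + c * z ^ γ + h z * z ^ γ) : h z = rpowRemainder γ c φ z := by
  rcases hz.eq_or_lt with rfl | hz
  · rw [h0, rpowRemainder_zero hγ]
  · have := (rpow_pos_of_pos hz γ).ne'
    rw [rpowRemainder, heq]
    field_simp
    ring

theorem hasDerivAt_rpowRemainder {d z : ℝ} (hz : 0 < z) (hφ : HasDerivAt φ d z) :
    HasDerivAt (rpowRemainder γ c φ) ((d - γ * (φ z - φ 0) / z) / z ^ γ) z := by
  have hrpow := hasDerivAt_rpow_const (p := γ) (Or.inl hz.ne')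
  have hpos := (rpow_pos_of_pos hz γ).ne'
  refine (((hφ.sub_const (φ 0)).sub (hrpow.const_mul c)).div hrpow hpos).congr_deriv ?_
  simp only [Pi.sub_apply, rpow_sub_one hz.ne']
  field_simp
  ring

theorem tendsto_rpowRemainder (hγ : 0 < γ) (hφ : ContinuousOn φ (Icc 0 1))
    (hd : ∀ z ∈ Ioo (0 : ℝ) 1, HasDerivAt φ (φ' z) z)
    (hlim : Tendsto (fun z => φ' z / (γ * z ^ (γ - 1))) (𝓝[>] 0) (𝓝 c)) :
    Tendsto (rpowRemainder γ c φ) (𝓝[>] 0) (𝓝 0) := by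
  have hquot : Tendsto (fun z => (φ z - φ 0) / z ^ γ) (𝓝[>] 0) (𝓝 c) :=
    HasDerivAt.lhopital_zero_right_on_Ico one_pos (fun z hz => (hd z hz).sub_const (φ 0))
      (fun z hz => hasDerivAt_rpow_const (Or.inl hz.1.ne'))
      ((hφ.mono Ico_subset_Icc_self).sub continuousOn_const)
      ((continuous_rpow_const hγ.le).continuousOn)
      (fun z hz => (mul_pos hγ (rpow_pos_of_pos hz.1 _)).ne') (sub_self _) (zero_rpow hγ.ne') hlim
  have hquot' := hquot.sub_const c
  rw [sub_self] at hquot'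
  refine hquot'.congr' ?_
  filter_upwards [self_mem_nhdsWithin] with z (hz : 0 < z)
  have := (rpow_pos_of_pos hz γ).ne'
  rw [rpowRemainder]
  field_simp

theorem exists_rpow_decomposition_of_tendsto (hγ : 0 < γ) (hφ : ContinuousOn φ (Icc 0 1))
    (hd : ∀ z ∈ Ioc (0 : ℝ) 1, HasDerivAt φ (φ' z) z) (hd' : ContinuousOn φ' (Ioc 0 1))
    (hlim : Tendsto (fun z => φ' z / (γ * z ^ (γ - 1))) (𝓝[>] 0) (𝓝 c)) :
    ∃ h h' : ℝ → ℝ, ContinuousOn h (Icc 0 1) ∧ (∀ z ∈ Ioc (0 : ℝ) 1, HasDerivAt h (h' z) z) ∧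
      ContinuousOn h' (Ioc 0 1) ∧ (∀ z ∈ Icc (0 : ℝ) 1, φ z = φ 0 + c * z ^ γ + h z * z ^ γ) ∧
      h 0 = 0 ∧ Tendsto (fun z => h' z * z) (𝓝[>] 0) (𝓝 0) := by
  have hR := tendsto_rpowRemainder hγ hφ (fun z hz => hd z (Ioo_subset_Ioc_self hz)) hlim
  have hR' (z) (hz : z ∈ Ioc (0 : ℝ) 1) :=
    hasDerivAt_rpowRemainder (γ := γ) (c := c) hz.1 (hd z hz)
  refine ⟨rpowRemainder γ c φ, fun z => (φ' z - γ * (φ z - φ 0) / z) / z ^ γ, ?_, hR', ?_,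
    fun z hz => eq_add_rpowRemainder_mul hγ.ne' hz.1, rpowRemainder_zero hγ.ne', ?_⟩
  · refine (continuousOn_Icc_iff_continuousOn_Ioc_and_tendsto one_pos).2
      ⟨fun z hz => (hR' z hz).continuousAt.continuousWithinAt, ?_⟩
    rwa [rpowRemainder_zero hγ.ne']
  · have := hφ.mono Ioc_subset_Icc_self
    fun_prop (disch := intro z hz; simp_all [hz.1.ne', (rpow_pos_of_pos hz.1 γ).ne'])
  · have key := ((hlim.sub_const c).sub hR).const_mul γ
    rw [sub_self, sub_zero, mul_zero] at key
    refine key.congr' ?_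
    filter_upwards [Ioo_mem_nhdsGT one_pos] with z hz
    have hdecomp : φ =ᶠ[𝓝 z] fun x => φ 0 + c * x ^ γ + rpowRemainder γ c φ x * x ^ γ := by
      filter_upwards [Ioi_mem_nhds hz.1] with x hx using eq_add_rpowRemainder_mul hγ.ne' hx.le
    rw [div_deriv_rpow_eq_of_eventuallyEq hγ.ne' hz.1 (hd z (Ioo_subset_Ioc_self hz))
      (hR' z (Ioo_subset_Ioc_self hz)) hdecomp]
    field_simp
    ring

theorem tendsto_div_deriv_rpow_of_decomposition {h h' : ℝ → ℝ} (hγ : γ ≠ 0)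
    (hd : ∀ z ∈ Ioo (0 : ℝ) 1, HasDerivAt φ (φ' z) z) (hh : ContinuousOn h (Icc 0 1))
    (hhd : ∀ z ∈ Ioo (0 : ℝ) 1, HasDerivAt h (h' z) z)
    (heq : ∀ z ∈ Icc (0 : ℝ) 1, φ z = φ 0 + c * z ^ γ + h z * z ^ γ) (h0 : h 0 = 0)
    (hlim : Tendsto (fun z => h' z * z) (𝓝[>] 0) (𝓝 0)) :
    Tendsto (fun z => φ' z / (γ * z ^ (γ - 1))) (𝓝[>] 0) (𝓝 c) := by
  have hh0 := ((continuousOn_Icc_iff_continuousOn_Ioc_and_tendsto one_pos).1 hh).2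
  have key := (tendsto_const_nhds (x := c)).add hh0 |>.add (hlim.div_const γ)
  rw [h0, zero_div, add_zero, add_zero] at key
  refine key.congr' ?_
  filter_upwards [Ioo_mem_nhdsGT one_pos] with z hz
  refine (div_deriv_rpow_eq_of_eventuallyEq (a := φ 0) hγ hz.1 (hd z hz) (hhd z hz) ?_).symm
  filter_upwards [Ioo_mem_nhds hz.1 hz.2] with x hx using heq x (Ioo_subset_Icc_self hx)

end

theorem stmt6 (γ : ℝ) (hγ : 0 < γ) (φ φ' : ℝ → ℝ)
    (hφ : ContinuousOn φ (Set.Icc 0 1))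
    (hd : ∀ z ∈ Set.Ioc (0:ℝ) 1, HasDerivAt φ (φ' z) z)
    (hd' : ContinuousOn φ' (Set.Ioc 0 1)) :
    ((∃ c : ℝ, Filter.Tendsto (fun z => φ' z / (γ * z ^ (γ - 1)))
        (nhdsWithin 0 (Set.Ioi 0)) (nhds c)) ↔
      (∃ c : ℝ, ∃ h h' : ℝ → ℝ,
        ContinuousOn h (Set.Icc 0 1) ∧
        (∀ z ∈ Set.Ioc (0:ℝ) 1, HasDerivAt h (h' z) z) ∧
        ContinuousOn h' (Set.Ioc 0 1) ∧
        (∀ z ∈ Set.Icc (0:ℝ) 1, φ z = φ 0 + c * z ^ γ + h z * z ^ γ) ∧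
        h 0 = 0 ∧
        Filter.Tendsto (fun z => h' z * z) (nhdsWithin 0 (Set.Ioi 0)) (nhds 0))) ∧
    (∀ c : ℝ, ∀ h h' : ℝ → ℝ,
        ContinuousOn h (Set.Icc 0 1) →
        (∀ z ∈ Set.Ioc (0:ℝ) 1, HasDerivAt h (h' z) z) →
        ContinuousOn h' (Set.Ioc 0 1) →
        (∀ z ∈ Set.Icc (0:ℝ) 1, φ z = φ 0 + c * z ^ γ + h z * z ^ γ) →
        h 0 = 0 →
        Filter.Tendsto (fun z => h' z * z) (nhdsWithin 0 (Set.Ioi 0)) (nhds 0) →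
        (Filter.Tendsto (fun z => φ' z / (γ * z ^ (γ - 1)))
            (nhdsWithin 0 (Set.Ioi 0)) (nhds c) ∧
          ∀ z ∈ Set.Icc (0:ℝ) 1, h z = (φ z - φ 0 - c * z ^ γ) / z ^ γ)) := by
  have hd₀ (z) (hz : z ∈ Ioo (0 : ℝ) 1) := hd z (Ioo_subset_Ioc_self hz)
  refine ⟨⟨fun ⟨c, hlim⟩ => ⟨c, exists_rpow_decomposition_of_tendsto hγ hφ hd hd' hlim⟩,
    fun ⟨c, h, h', hh, hhd, _, heq, h0, hlim⟩ => ⟨c, ?_⟩⟩,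
    fun c h h' hh hhd _ heq h0 hlim =>
      ⟨?_, fun z hz => eq_rpowRemainder_of_eq_add_mul hγ.ne' h0 hz.1 (heq z hz)⟩⟩
  all_goals
    exact tendsto_div_deriv_rpow_of_decomposition hγ.ne' hd₀ hh
      (fun z hz => hhd z (Ioo_subset_Ioc_self hz)) heq h0 hlim
end

section
/- Let α > 0, γ > 0, and let f be the Manneville–Pomeau map of parameter α. There exists a constant D > 0 such that for every φ ∈ C^{1,γ}_†(ℝ), every n ≥ 1, every connected component J of f^{−n}(J₀), and all x, y ∈ J, one has |S_n φ(x) − S_n φ(y)| ≤ D |φ|_{1,γ}, where S_n φ = Σ_{j=0}^{n−1} φ ∘ f^j. -/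
open Real Set Filter Topology

/-!
Since `|φ a - φ b| ≤ M |a ^ γ - b ^ γ|` on `(0, 1]`, it suffices to bound
`∑ j < n, |(f^j u) ^ γ - (f^j v) ^ γ|`, and a bound `|φ'(z)| ≤ M γ z ^ (γ - 1)` with `γ > 1` implies
the one with `γ = 1`, so let `γ ≤ 1`. Let `x₁ = x_1 > x_2 > ⋯` be the preimages of `x₁` under the
left branch, so that `x_L - x_{L+1} = x_{L+1} ^ (1 + α)`. Two points `u`, `v` of a component of
`f⁻ⁿ(J₀)` follow the same branches up to time `n`: otherwise some iterate of the component would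
contain points just above `0`, which do not reach `J₀` in time. At a time `j < n` let `L` be the
number of steps until the orbit next enters `J₀` and `k` the number of its visits to `J₀` in
`[j, n)`. Expansion on the right branch gives `|f^j u - f^j v| ≤ λ⁻ᵏ` with `λ = f'(x₁) > 1`, and for
`L > 0` both points lie in `(x_{L+1}, x_L]`; hence the `j`-th term is at most
`min (C x_{L+1} ^ (α + γ)) (λ ^ (-γ k))`. As `(L, k)` determines `j`, the sum is dominated by the
double series of these minima, which converges because `x_L ^ (α + δ)` is summable for `δ > 0`.
-/

namespace Real

variable {p x y : ℝ}

lemma rpow_le_rpow_add_mul_rpow_sub_one (hx : 0 < x) (hy : 0 ≤ y) (hp0 : 0 ≤ p) (hp1 : p ≤ 1) :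
    y ^ p ≤ x ^ p + p * x ^ (p - 1) * (y - x) := by
  have hB := rpow_one_add_le_one_add_mul_self (s := y / x - 1)
    (by linarith [div_nonneg hy hx.le]) hp0 hp1
  rw [add_sub_cancel, div_rpow hy hx.le, div_le_iff₀ (by positivity)] at hB
  rw [rpow_sub_one hx.ne']
  calc y ^ p ≤ (1 + p * (y / x - 1)) * x ^ p := hB
    _ = x ^ p + p * (x ^ p / x) * (y - x) := by field_simp

lemma rpow_add_mul_rpow_sub_one_le (hx : 0 < x) (hy : 0 ≤ y) (hp : 1 ≤ p) :
    x ^ p + p * x ^ (p - 1) * (y - x) ≤ y ^ p := by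
  have hB := one_add_mul_self_le_rpow_one_add (s := y / x - 1)
    (by linarith [div_nonneg hy hx.le]) hp
  rw [add_sub_cancel, div_rpow hy hx.le, le_div_iff₀ (by positivity)] at hB
  rw [rpow_sub_one hx.ne']
  calc x ^ p + p * (x ^ p / x) * (y - x) = (1 + p * (y / x - 1)) * x ^ p := by field_simp
    _ ≤ y ^ p := hB

lemma abs_rpow_sub_rpow_le_abs_sub_rpow (hx : 0 ≤ x) (hy : 0 ≤ y) (hp0 : 0 ≤ p) (hp1 : p ≤ 1) :
    |x ^ p - y ^ p| ≤ |x - y| ^ p := by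
  wlog hyx : y ≤ x generalizing x y
  · rw [abs_sub_comm, abs_sub_comm x]
    exact this hy hx (le_of_not_ge hyx)
  have h := rpow_add_le_add_rpow (sub_nonneg.2 hyx) hy hp0 hp1
  rw [sub_add_cancel] at h
  rw [abs_of_nonneg (sub_nonneg.2 (rpow_le_rpow hy hyx hp0)), abs_of_nonneg (sub_nonneg.2 hyx)]
  linarith

lemma abs_rpow_sub_rpow_le_mul_abs_sub {c : ℝ} (hc : 0 < c) (hx : c ≤ x) (hy : c ≤ y)
    (hp0 : 0 ≤ p) (hp1 : p ≤ 1) : |x ^ p - y ^ p| ≤ p * c ^ (p - 1) * |x - y| := by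
  wlog hyx : y ≤ x generalizing x y
  · rw [abs_sub_comm, abs_sub_comm x]
    exact this hy hx (le_of_not_ge hyx)
  have hy0 := hc.trans_le hy
  have h := rpow_le_rpow_add_mul_rpow_sub_one hy0 (hy0.le.trans hyx) hp0 hp1
  have hcy : y ^ (p - 1) ≤ c ^ (p - 1) := rpow_le_rpow_of_nonpos hc hy (by linarith)
  rw [abs_of_nonneg (sub_nonneg.2 (rpow_le_rpow hy0.le hyx hp0)), abs_of_nonneg (sub_nonneg.2 hyx)]
  have := mul_le_mul_of_nonneg_right (mul_le_mul_of_nonneg_left hcy hp0) (sub_nonneg.2 hyx)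
  linarith

lemma min_le_rpow_mul_rpow {a b θ : ℝ} (ha : 0 ≤ a) (hb : 0 ≤ b) (hθ0 : 0 ≤ θ) (hθ1 : θ ≤ 1) :
    min a b ≤ a ^ (1 - θ) * b ^ θ := by
  have hm := le_min ha hb
  calc min a b = min a b ^ (1 - θ) * min a b ^ θ := by
        rw [← rpow_add' hm (by norm_num), sub_add_cancel, rpow_one]
    _ ≤ a ^ (1 - θ) * b ^ θ := by
        gcongr
        · exact min_le_left a b
        · exact min_le_right a b

lemma mul_rpow_sub_one_le_max_mul_min {γ z : ℝ} (hz : z ∈ Ioc 0 1) :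
    γ * z ^ (γ - 1) ≤ max γ 1 * (min γ 1 * z ^ (min γ 1 - 1)) := by
  rcases le_total γ 1 with hγ | hγ
  · simp [hγ]
  · simp only [hγ, max_eq_left, min_eq_right, sub_self, rpow_zero, mul_one]
    exact mul_le_of_le_one_right (by linarith) (rpow_le_one hz.1.le hz.2 (by linarith))

end Real

lemma abs_sub_le_mul_abs_rpow_sub {φ φ' : ℝ → ℝ} {γ M : ℝ} (hγ : 0 ≤ γ)
    (hφ : ContinuousOn φ (Icc 0 1)) (hφ' : ∀ z ∈ Ioc (0 : ℝ) 1, HasDerivAt φ (φ' z) z)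
    (hM : ∀ z ∈ Ioc (0 : ℝ) 1, |φ' z| ≤ M * (γ * z ^ (γ - 1))) {a b : ℝ} (ha : a ∈ Ioc 0 1)
    (hb : b ∈ Ioc 0 1) : |φ a - φ b| ≤ M * |a ^ γ - b ^ γ| := by
  wlog hba : b ≤ a generalizing a b
  · rw [abs_sub_comm, abs_sub_comm (a ^ γ)]
    exact this hb ha (le_of_not_ge hba)
  have hsub : Icc b a ⊆ Ioc 0 1 := fun x hx => ⟨hb.1.trans_le hx.1, hx.2.trans ha.2⟩
  have hsub' : Ico b a ⊆ Ioc 0 1 := Ico_subset_Icc_self.trans hsub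
  have key := image_norm_le_of_norm_deriv_right_le_deriv_boundary' (a := b) (b := a)
    (f := fun t => φ t - φ b) (f' := φ') (B := fun t => M * (t ^ γ - b ^ γ))
    (B' := fun t => M * (γ * t ^ (γ - 1)))
    ((hφ.mono (hsub.trans Ioc_subset_Icc_self)).sub continuousOn_const)
    (fun x hx => ((hφ' x (hsub' hx)).sub_const _).hasDerivWithinAt) (by simp)
    (continuousOn_const.mul ((continuousOn_id.rpow_const fun x hx =>
      Or.inl (hsub hx).1.ne').sub continuousOn_const))
    (fun x hx => (((hasDerivAt_rpow_const (Or.inl (hsub' hx).1.ne')).sub_const _).const_mul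
      M).hasDerivWithinAt)
    (fun x hx => hM x (hsub' hx)) (right_mem_Icc.2 hba)
  rwa [abs_of_nonneg (sub_nonneg.2 (rpow_le_rpow hb.1.le hba hγ))]

namespace Nat

variable {p : ℕ → Prop} [DecidablePred p] {j n : ℕ}

lemma mul_pow_count_le_mul_pow_count {d : ℕ → ℝ} {c : ℝ} (hc : 0 ≤ c)
    (hd : ∀ k, j ≤ k → k < n → (if p k then c else 1) * d k ≤ d (k + 1)) (hjn : j ≤ n) :
    d j * c ^ count p n ≤ d n * c ^ count p j := by
  induction n, hjn using Nat.le_induction with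
  | base => rfl
  | succ n hjn ih =>
    have ih := ih fun k hjk hkn => hd k hjk (hkn.trans n.lt_succ_self)
    have hstep := hd n hjn n.lt_succ_self
    rw [count_succ, pow_add]
    split_ifs at hstep ⊢
    · calc d j * (c ^ count p n * c ^ 1) = d j * c ^ count p n * c := by ring
        _ ≤ d n * c ^ count p j * c := by gcongr
        _ = c * d n * c ^ count p j := by ring
        _ ≤ d (n + 1) * c ^ count p j := by gcongr
    · simpa using ih.trans (by gcongr; simpa using hstep)

lemma le_nth_count_of_le (hn : p n) (hjn : j ≤ n) : j ≤ nth p (count p j) :=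
  le_nth_count' ⟨n, hn, hjn⟩

lemma nth_count_le_of_le (hn : p n) (hjn : j ≤ n) : nth p (count p j) ≤ n := by
  rw [nth_count_eq_sInf]
  exact Nat.sInf_le (show n ∈ {i | p i ∧ j ≤ i} from ⟨hn, hjn⟩)

lemma nth_count_mem_of_le (hn : p n) (hjn : j ≤ n) : p (nth p (count p j)) := by
  rw [nth_count_eq_sInf]
  exact (Nat.sInf_mem (s := {i | p i ∧ j ≤ i}) ⟨n, hn, hjn⟩).1

lemma not_of_lt_nth_count {i : ℕ} (hji : j ≤ i) (hi : i < nth p (count p j)) : ¬ p i := by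
  rw [nth_count_eq_sInf] at hi
  exact fun hpi => Nat.notMem_of_lt_sInf hi ⟨hpi, hji⟩

/-- `nth p (count p j)` is the first `k ≥ j` with `p k`. -/
lemma injOn_nth_count_sub (hn : p n) :
    InjOn (fun j => (nth p (count p j) - j, count p n - count p j)) (Iio n) := by
  intro j₁ hj₁ j₂ hj₂ h
  simp only [Prod.mk.injEq] at h
  have h₁ := count_monotone p (le_of_lt hj₁)
  have h₂ := count_monotone p (le_of_lt hj₂)
  have hc : count p j₁ = count p j₂ := by omega
  have hle₁ := le_nth_count_of_le hn (le_of_lt hj₁)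
  have hle₂ := le_nth_count_of_le hn (le_of_lt hj₂)
  rw [hc] at h hle₁
  omega

lemma sum_le_tsum_nth_count {F : ℕ × ℕ → ℝ} (hF0 : 0 ≤ F) (hF : Summable F) (hn : p n) :
    ∑ j ∈ Finset.range n, F (nth p (count p j) - j, count p n - count p j) ≤ ∑' q, F q := by
  rw [← Finset.sum_image (g := fun j => (nth p (count p j) - j, count p n - count p j))
    (by simpa using injOn_nth_count_sub hn)]
  exact hF.sum_le_tsum _ fun q _ => hF0 q

end Nat

lemma summable_min_pow {P : ℕ → ℝ} {μ θ : ℝ} (hP0 : 0 ≤ P) (hP : Summable fun L => P L ^ (1 - θ))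
    (hμ0 : 0 ≤ μ) (hμ1 : μ < 1) (hθ0 : 0 < θ) (hθ1 : θ ≤ 1) :
    Summable fun q : ℕ × ℕ => min (P q.1) (μ ^ q.2) := by
  have hgeom : Summable fun r : ℕ => (μ ^ r) ^ θ := by
    simp_rw [← rpow_pow_comm hμ0]
    exact summable_geometric_of_lt_one (by positivity) (rpow_lt_one hμ0 hμ1 hθ0)
  refine .of_nonneg_of_le (fun q => le_min (hP0 _) (pow_nonneg hμ0 _))
    (fun q => Real.min_le_rpow_mul_rpow (hP0 _) (pow_nonneg hμ0 _) hθ0.le hθ1)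
    (hP.mul_of_nonneg hgeom (fun L => rpow_nonneg (hP0 L) _)
      fun r => rpow_nonneg (pow_nonneg hμ0 _) _)

lemma Set.MapsTo.iterate_image {X : Type*} {f : X → X} {s t : Set X} {j k : ℕ}
    (h : MapsTo f^[j + k] s t) : MapsTo f^[k] (f^[j] '' s) t := by
  rintro _ ⟨x, hx, rfl⟩
  rw [← Function.iterate_add_apply, add_comm]
  exact h hx

namespace MP

/-- `MP α` is `lift α` reduced mod `1`. -/
noncomputable def lift (α x : ℝ) : ℝ := x * (1 + x ^ α)

variable {α x₁ : ℝ}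

lemma continuous_lift (hα : 0 ≤ α) : Continuous (lift α) :=
  continuous_id.mul (continuous_const.add (continuous_rpow_const hα))

lemma strictMonoOn_lift (hα : 0 ≤ α) : StrictMonoOn (lift α) (Ici 0) := by
  intro x hx y _ hxy
  have hxy' : x ^ α ≤ y ^ α := rpow_le_rpow hx hxy.le hα
  have : 0 ≤ x ^ α := rpow_nonneg hx α
  simp only [lift]
  nlinarith [mul_nonneg (hx.trans hxy.le) (sub_nonneg.2 hxy')]

lemma lift_zero : lift α 0 = 0 := by simp [lift]

lemma lift_one : lift α 1 = 2 := by norm_num [lift]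

lemma lift_sub_self (x : ℝ) : lift α x - x = x * x ^ α := by rw [lift]; ring

lemma self_le_lift {x : ℝ} (hx : 0 ≤ x) : x ≤ lift α x := by
  linarith [lift_sub_self (α := α) x, mul_nonneg hx (rpow_nonneg hx α)]

lemma self_lt_lift {x : ℝ} (hx : 0 < x) : x < lift α x := by
  linarith [lift_sub_self (α := α) x, mul_pos hx (rpow_pos_of_pos hx α)]

lemma mul_sub_le_lift_sub (hα : 0 ≤ α) {p q : ℝ} (hp : 0 < p) (hpq : p ≤ q) :
    (1 + (1 + α) * p ^ α) * (q - p) ≤ lift α q - lift α p := by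
  have h := rpow_add_mul_rpow_sub_one_le hp (hp.le.trans hpq) (by linarith : 1 ≤ 1 + α)
  have hpow : ∀ x : ℝ, 0 ≤ x → x ^ (1 + α) = x * x ^ α := fun x hx => by
    rw [rpow_add' hx (by linarith), rpow_one]
  rw [hpow p hp.le, hpow q (hp.le.trans hpq), add_sub_cancel_left] at h
  simp only [lift]
  linarith

lemma mul_abs_sub_le_abs_lift_sub (hα : 0 ≤ α) {a b : ℝ} (ha : 0 < a) (hb : 0 < b) :
    (1 + (1 + α) * min a b ^ α) * |a - b| ≤ |lift α a - lift α b| := by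
  wlog hba : b ≤ a generalizing a b
  · rw [min_comm, abs_sub_comm, abs_sub_comm (lift α a)]
    exact this hb ha (le_of_not_ge hba)
  rw [min_eq_right hba, abs_of_nonneg (sub_nonneg.2 hba)]
  exact (mul_sub_le_lift_sub hα hb hba).trans (le_abs_self _)

lemma surjOn_lift (hα : 0 ≤ α) : SurjOn (lift α) (Ici 0) (Ici 0) := by
  intro y hy
  obtain ⟨x, hx, hxy⟩ := intermediate_value_Icc (mem_Ici.1 hy) (continuous_lift hα).continuousOn
    ⟨by simp [lift, hy.out], self_le_lift hy⟩
  exact ⟨x, hx.1, hxy⟩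

lemma lift_le_one_iff (hα : 0 ≤ α) (hx₁ : 0 ≤ x₁) (hfix : lift α x₁ = 1) {x : ℝ} (hx : 0 ≤ x) :
    lift α x ≤ 1 ↔ x ≤ x₁ := by
  rw [← hfix]
  exact (strictMonoOn_lift hα).le_iff_le hx hx₁

lemma eqOn_lift (hα : 0 ≤ α) (hx₁ : 0 ≤ x₁) (hfix : lift α x₁ = 1) :
    EqOn (MP α) (lift α) (Icc 0 x₁) := fun _ hx =>
  if_pos ((lift_le_one_iff hα hx₁ hfix hx.1).2 hx.2)

lemma eqOn_lift_sub_one (hα : 0 ≤ α) (hx₁ : 0 ≤ x₁) (hfix : lift α x₁ = 1) :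
    EqOn (MP α) (fun x => lift α x - 1) (Ioi x₁) := fun _ hx =>
  if_neg ((lift_le_one_iff hα hx₁ hfix (hx₁.trans (le_of_lt hx))).not.2 (not_le.2 hx))

lemma continuousOn_Icc (hα : 0 ≤ α) (hx₁ : 0 ≤ x₁) (hfix : lift α x₁ = 1) :
    ContinuousOn (MP α) (Icc 0 x₁) :=
  (continuous_lift hα).continuousOn.congr (eqOn_lift hα hx₁ hfix)

lemma continuousOn_Ioi (hα : 0 ≤ α) (hx₁ : 0 ≤ x₁) (hfix : lift α x₁ = 1) :
    ContinuousOn (MP α) (Ioi x₁) :=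
  ((continuous_lift hα).sub continuous_const).continuousOn.congr (eqOn_lift_sub_one hα hx₁ hfix)

lemma map_zero : MP α 0 = 0 := by simp [MP]

lemma mapsTo_Ioc (hα : 0 ≤ α) : MapsTo (MP α) (Ioc 0 1) (Ioc 0 1) := by
  intro x hx
  have hlt := self_lt_lift (α := α) hx.1
  by_cases h : lift α x ≤ 1
  · rw [show MP α x = lift α x from if_pos h]
    exact ⟨hx.1.trans hlt, h⟩
  · rw [show MP α x = lift α x - 1 from if_neg h]
    have := (strictMonoOn_lift hα).monotoneOn hx.1.le (mem_Ici.2 zero_le_one) hx.2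
    rw [lift_one] at this
    constructor <;> linarith [not_le.1 h]

lemma iterate_mem_Ioc (hα : 0 ≤ α) {w : ℝ} (hw : w ∈ Ioc 0 1) (j : ℕ) :
    (MP α)^[j] w ∈ Ioc 0 1 :=
  (mapsTo_Ioc hα).iterate j hw

lemma mul_abs_sub_le_abs_sub (hα : 0 ≤ α) (hx₁ : 0 ≤ x₁) (hfix : lift α x₁ = 1) {a b : ℝ}
    (ha : 0 < a) (hb : 0 < b) (hab : x₁ < a ↔ x₁ < b) :
    (if x₁ < a then 1 + (1 + α) * x₁ ^ α else 1) * |a - b| ≤ |MP α a - MP α b| := by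
  have hMP : MP α a - MP α b = lift α a - lift α b := by
    by_cases h : x₁ < a
    · rw [eqOn_lift_sub_one hα hx₁ hfix h, eqOn_lift_sub_one hα hx₁ hfix (hab.1 h)]
      ring
    · rw [eqOn_lift hα hx₁ hfix ⟨ha.le, not_lt.1 h⟩,
        eqOn_lift hα hx₁ hfix ⟨hb.le, not_lt.1 (hab.not.1 h)⟩]
  rw [hMP]
  refine le_trans (mul_le_mul_of_nonneg_right ?_ (abs_nonneg _))
    (mul_abs_sub_le_abs_lift_sub hα ha hb)
  have hmin : 0 ≤ min a b ^ α := rpow_nonneg (le_min ha.le hb.le) α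
  split_ifs with h
  · have : x₁ ^ α ≤ min a b ^ α := rpow_le_rpow hx₁ (le_min h.le (hab.1 h).le) hα
    nlinarith
  · nlinarith

/-- `cutPoint α x₁ L` is the point `x_{L+1}` of the left-branch preimages of `x₁ = x_1`. -/
noncomputable def cutPoint (α x₁ : ℝ) : ℕ → ℝ
  | 0 => x₁
  | L + 1 => Function.invFunOn (lift α) (Ici 0) (cutPoint α x₁ L)

lemma cutPoint_nonneg (hα : 0 ≤ α) (hx₁ : 0 ≤ x₁) : ∀ L, 0 ≤ cutPoint α x₁ L
  | 0 => hx₁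
  | L + 1 => Function.invFunOn_mem (surjOn_lift hα (cutPoint_nonneg hα hx₁ L))

lemma lift_cutPoint_succ (hα : 0 ≤ α) (hx₁ : 0 ≤ x₁) (L : ℕ) :
    lift α (cutPoint α x₁ (L + 1)) = cutPoint α x₁ L :=
  Function.invFunOn_eq (surjOn_lift hα (cutPoint_nonneg hα hx₁ L))

lemma cutPoint_sub_cutPoint_succ (hα : 0 ≤ α) (hx₁ : 0 ≤ x₁) (L : ℕ) :
    cutPoint α x₁ L - cutPoint α x₁ (L + 1) =
      cutPoint α x₁ (L + 1) * cutPoint α x₁ (L + 1) ^ α := by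
  rw [← lift_sub_self, lift_cutPoint_succ hα hx₁]

lemma cutPoint_pos (hα : 0 ≤ α) (hx₁ : 0 < x₁) : ∀ L, 0 < cutPoint α x₁ L
  | 0 => hx₁
  | L + 1 => by
    refine (cutPoint_nonneg hα hx₁.le _).lt_of_ne fun h => (cutPoint_pos hα hx₁ L).ne' ?_
    rw [← lift_cutPoint_succ hα hx₁.le, ← h, lift_zero]

lemma cutPoint_succ_lt (hα : 0 ≤ α) (hx₁ : 0 < x₁) (L : ℕ) :
    cutPoint α x₁ (L + 1) < cutPoint α x₁ L :=
  lift_cutPoint_succ hα hx₁.le L ▸ self_lt_lift (cutPoint_pos hα hx₁ _)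

lemma cutPoint_le (hα : 0 ≤ α) (hx₁ : 0 < x₁) (L : ℕ) : cutPoint α x₁ L ≤ x₁ :=
  antitone_nat_of_succ_le (fun L => (cutPoint_succ_lt hα hx₁ L).le) L.zero_le

lemma iterate_le_of_le_cutPoint (hα : 0 ≤ α) (hx₁ : 0 < x₁) (hfix : lift α x₁ = 1) :
    ∀ k {z : ℝ}, 0 ≤ z → z ≤ cutPoint α x₁ k → (MP α)^[k] z ≤ x₁
  | 0, _, _, hz => hz
  | k + 1, z, hz0, hz => by
    rw [Function.iterate_succ_apply,
      eqOn_lift hα hx₁.le hfix ⟨hz0, hz.trans (cutPoint_le hα hx₁ _)⟩]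
    refine iterate_le_of_le_cutPoint hα hx₁ hfix k (hz0.trans (self_le_lift hz0)) ?_
    rw [← lift_cutPoint_succ hα hx₁.le k]
    exact (strictMonoOn_lift hα).monotoneOn hz0 (cutPoint_nonneg hα hx₁.le _) hz

lemma mem_Ioc_cutPoint (hα : 0 ≤ α) (hx₁ : 0 < x₁) (hfix : lift α x₁ = 1) :
    ∀ L {z : ℝ}, 0 ≤ z → (∀ i ≤ L, (MP α)^[i] z ≤ x₁) → x₁ < (MP α)^[L + 1] z →
      z ∈ Ioc (cutPoint α x₁ (L + 1)) (cutPoint α x₁ L)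
  | L, z, hz0, hleft, hexit => by
    have hzx : z ≤ x₁ := hleft 0 L.zero_le
    have hMP : MP α z = lift α z := eqOn_lift hα hx₁.le hfix ⟨hz0, hzx⟩
    have hmono := strictMonoOn_lift hα
    have hc := cutPoint_nonneg hα hx₁.le
    rw [Function.iterate_succ_apply, hMP] at hexit
    cases L with
    | zero =>
      refine ⟨?_, hzx⟩
      rwa [← hmono.lt_iff_lt (hc 1) hz0, lift_cutPoint_succ hα hx₁.le]
    | succ L =>
      have hmem := mem_Ioc_cutPoint hα hx₁ hfix L (hz0.trans (self_le_lift hz0))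
        (fun i hi => by simpa [← Function.iterate_succ_apply, hMP] using hleft (i + 1) (by omega))
        hexit
      rw [← lift_cutPoint_succ hα hx₁.le, ← lift_cutPoint_succ hα hx₁.le L] at hmem
      exact ⟨(hmono.lt_iff_lt (hc _) hz0).1 hmem.1, (hmono.le_iff_le hz0 (hc _)).1 hmem.2⟩

lemma abs_rpow_sub_rpow_le_cutPoint (hα : 0 ≤ α) (hx₁ : x₁ ∈ Ioc 0 1) {γ : ℝ} (hγ0 : 0 < γ)
    (hγ1 : γ ≤ 1) {L : ℕ} {a b : ℝ} (ha : a ∈ Ioc (cutPoint α x₁ (L + 1)) (cutPoint α x₁ L))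
    (hb : b ∈ Ioc (cutPoint α x₁ (L + 1)) (cutPoint α x₁ L)) :
    |a ^ γ - b ^ γ| ≤ (cutPoint α x₁ (L + 1) / x₁) ^ (α + γ) := by
  set c := cutPoint α x₁ (L + 1)
  have hc : 0 < c := cutPoint_pos hα hx₁.1 _
  have hgap : |a - b| ≤ c * c ^ α := by
    have := cutPoint_sub_cutPoint_succ hα hx₁.1.le L
    rw [abs_sub_le_iff]
    constructor <;> linarith [ha.1, ha.2, hb.1, hb.2]
  calc |a ^ γ - b ^ γ| ≤ γ * c ^ (γ - 1) * |a - b| :=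
        abs_rpow_sub_rpow_le_mul_abs_sub hc ha.1.le hb.1.le hγ0.le hγ1
    _ ≤ γ * c ^ (γ - 1) * (c * c ^ α) := by gcongr
    _ = γ * c ^ (α + γ) := by
        rw [rpow_add hc, rpow_sub_one hc.ne']
        field_simp
    _ ≤ c ^ (α + γ) := mul_le_of_le_one_left (by positivity) hγ1
    _ ≤ (c / x₁) ^ (α + γ) := by
        rw [div_rpow hc.le hx₁.1.le]
        exact le_div_self (by positivity) (rpow_pos_of_pos hx₁.1 _)
          (rpow_le_one hx₁.1.le hx₁.2 (by linarith))

/-- Concavity of `t ↦ t ^ δ`, with `x_{L+1} ≤ 2 x_{L+2}`. -/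
lemma mul_cutPoint_succ_rpow_le (hα : 0 ≤ α) (hx₁ : x₁ ∈ Ioc 0 1) {δ : ℝ} (hδ0 : 0 < δ)
    (hδ1 : δ ≤ 1) (L : ℕ) :
    δ * 2 ^ (δ - 1) * cutPoint α x₁ (L + 1) ^ (α + δ) ≤
      cutPoint α x₁ L ^ δ - cutPoint α x₁ (L + 1) ^ δ := by
  set c := cutPoint α x₁ (L + 1)
  set X := cutPoint α x₁ L
  have hc : 0 < c := cutPoint_pos hα hx₁.1 _
  have hX : X - c = c * c ^ α := cutPoint_sub_cutPoint_succ hα hx₁.1.le L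
  have hcX : c < X := cutPoint_succ_lt hα hx₁.1 L
  have hcα : c ^ α ≤ 1 := rpow_le_one hc.le ((cutPoint_le hα hx₁.1 _).trans hx₁.2) hα
  have hX2 : X ≤ 2 * c := by nlinarith
  have htan := rpow_le_rpow_add_mul_rpow_sub_one (hc.trans hcX) hc.le hδ0.le hδ1
  have hpow : (2 * c) ^ (δ - 1) ≤ X ^ (δ - 1) :=
    rpow_le_rpow_of_nonpos (hc.trans hcX) hX2 (by linarith)
  have hid : δ * 2 ^ (δ - 1) * c ^ (α + δ) = δ * (2 * c) ^ (δ - 1) * (c * c ^ α) := by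
    rw [mul_rpow zero_le_two hc.le, rpow_add hc, rpow_sub_one hc.ne']
    field_simp
  have := mul_le_mul_of_nonneg_right (mul_le_mul_of_nonneg_left hpow hδ0.le)
    (mul_pos hc (rpow_pos_of_pos hc α)).le
  rw [show c - X = -(c * c ^ α) by linarith] at htan
  rw [hid]
  linarith

lemma summable_cutPoint_rpow (hα : 0 ≤ α) (hx₁ : x₁ ∈ Ioc 0 1) {δ : ℝ} (hδ0 : 0 < δ)
    (hδ1 : δ ≤ 1) : Summable fun L => cutPoint α x₁ L ^ (α + δ) := by
  have hK : 0 < δ * 2 ^ (δ - 1) := by positivity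
  refine (summable_nat_add_iff 1).1 (summable_of_sum_range_le (c := x₁ ^ δ / (δ * 2 ^ (δ - 1)))
    (fun L => rpow_nonneg (cutPoint_nonneg hα hx₁.1.le _) _) fun N => ?_)
  rw [le_div_iff₀ hK, Finset.sum_mul]
  calc ∑ L ∈ Finset.range N, cutPoint α x₁ (L + 1) ^ (α + δ) * (δ * 2 ^ (δ - 1))
      ≤ ∑ L ∈ Finset.range N, (cutPoint α x₁ L ^ δ - cutPoint α x₁ (L + 1) ^ δ) :=
        Finset.sum_le_sum fun L _ => by
          linarith [mul_cutPoint_succ_rpow_le hα hx₁ hδ0 hδ1 L]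
    _ = x₁ ^ δ - cutPoint α x₁ N ^ δ := Finset.sum_range_sub' _ N
    _ ≤ x₁ ^ δ := sub_le_self _ (rpow_nonneg (cutPoint_nonneg hα hx₁.1.le _) _)

/-- A preconnected set crossing `x₁` contains points `y > x₁` with `MP α y` arbitrarily close
to `0`, and the orbit of such a point stays in `[0, x₁]` for a long time. -/
lemma subset_Iic_or_subset_Ioi (hα : 0 ≤ α) (hx₁ : 0 < x₁) (hfix : lift α x₁ = 1) {S : Set ℝ}
    (hS : IsPreconnected S) {k : ℕ} (hk : MapsTo (MP α)^[k + 1] S (Ioi x₁)) :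
    S ⊆ Iic x₁ ∨ S ⊆ Ioi x₁ := by
  by_contra! h
  obtain ⟨⟨q, hq, hqx⟩, ⟨p, hp, hpx⟩⟩ := And.intro (not_subset.1 h.1) (not_subset.1 h.2)
  rw [mem_Iic, not_le] at hqx
  rw [mem_Ioi, not_lt] at hpx
  have hsub : Icc x₁ q ⊆ S := (Icc_subset_Icc_left hpx).trans (hS.ordConnected.out hp hq)
  have hq1 : 1 < lift α q := hfix ▸ strictMonoOn_lift hα hx₁.le (hx₁.le.trans hqx.le) hqx
  set ε := min (cutPoint α x₁ k) (lift α q - 1)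
  have hε : 0 < ε := lt_min (cutPoint_pos hα hx₁ k) (by linarith)
  obtain ⟨y, hy, hyε⟩ := intermediate_value_Icc hqx.le (continuous_lift hα).continuousOn
    (show 1 + ε ∈ Icc (lift α x₁) (lift α q) from
      ⟨by linarith, by linarith [min_le_right (cutPoint α x₁ k) (lift α q - 1)]⟩)
  have hyx : x₁ < y := hy.1.lt_of_ne (by rintro rfl; linarith)
  have hMy : MP α y = ε := by
    rw [eqOn_lift_sub_one hα hx₁.le hfix hyx]
    simp only [hyε, add_sub_cancel_left]
  have hexit := hk (hsub hy)
  rw [mem_Ioi, Function.iterate_succ_apply, hMy] at hexit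
  exact (iterate_le_of_le_cutPoint hα hx₁ hfix k hε.le (min_le_left _ _)).not_gt hexit

lemma isPreconnected_image_iterate (hα : 0 ≤ α) (hx₁ : 0 < x₁) (hfix : lift α x₁ = 1)
    {J : Set ℝ} (hJ : IsPreconnected J) (hJ1 : J ⊆ Ioc 0 1) {n : ℕ}
    (hn : MapsTo (MP α)^[n] J (Ioi x₁)) : ∀ j ≤ n, IsPreconnected ((MP α)^[j] '' J)
  | 0, _ => by simpa using hJ
  | j + 1, hj => by
    have hpre := isPreconnected_image_iterate hα hx₁ hfix hJ hJ1 hn j (by omega)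
    rw [show n = j + (n - j - 1 + 1) by omega] at hn
    rw [Function.iterate_succ', image_comp]
    refine hpre.image _ ?_
    rcases subset_Iic_or_subset_Ioi hα hx₁ hfix hpre hn.iterate_image with h | h
    · refine (continuousOn_Icc hα hx₁.le hfix).mono fun y hy => ⟨?_, h hy⟩
      obtain ⟨z, hz, rfl⟩ := hy
      exact (iterate_mem_Ioc hα (hJ1 hz) j).1.le
    · exact (continuousOn_Ioi hα hx₁.le hfix).mono h

lemma subset_Ioc_of_iterate_mem_Ioc (hx₁ : 0 < x₁) {n : ℕ} {J : Set ℝ}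
    (hJ : J ⊆ {z | z ∈ Icc 0 1 ∧ (MP α)^[n] z ∈ Ioc x₁ 1}) : J ⊆ Ioc 0 1 := by
  intro z hz
  refine ⟨(hJ hz).1.1.lt_of_ne ?_, (hJ hz).1.2⟩
  rintro rfl
  have := (hJ hz).2.1
  rw [Function.iterate_fixed map_zero] at this
  exact hx₁.not_gt this

def InRightBranch (α x₁ u : ℝ) (k : ℕ) : Prop := x₁ < (MP α)^[k] u

structure SameItinerary (α x₁ : ℝ) (n : ℕ) (u v : ℝ) : Prop where
  fst_mem : u ∈ Ioc 0 1
  snd_mem : v ∈ Ioc 0 1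
  inRightBranch_iff : ∀ j ≤ n, InRightBranch α x₁ u j ↔ InRightBranch α x₁ v j
  inRightBranch_last : InRightBranch α x₁ u n

lemma sameItinerary_of_isPreconnected (hα : 0 ≤ α) (hx₁ : 0 < x₁) (hfix : lift α x₁ = 1)
    {J : Set ℝ} (hJ : IsPreconnected J) (hJ1 : J ⊆ Ioc 0 1) {n : ℕ}
    (hn : MapsTo (MP α)^[n] J (Ioi x₁)) {u v : ℝ} (hu : u ∈ J) (hv : v ∈ J) :
    SameItinerary α x₁ n u v where
  fst_mem := hJ1 hu
  snd_mem := hJ1 hv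
  inRightBranch_iff j hj := by
    rcases hj.eq_or_lt with rfl | hjn
    · exact iff_of_true (hn hu) (hn hv)
    have hpre := isPreconnected_image_iterate hα hx₁ hfix hJ hJ1 hn j hj
    rw [show n = j + (n - j - 1 + 1) by omega] at hn
    rcases subset_Iic_or_subset_Ioi hα hx₁ hfix hpre hn.iterate_image with h | h
    · exact iff_of_false (h (mem_image_of_mem _ hu)).not_gt (h (mem_image_of_mem _ hv)).not_gt
    · exact iff_of_true (h (mem_image_of_mem _ hu)) (h (mem_image_of_mem _ hv))
  inRightBranch_last := hn hu

/-- The two bounds for the term of time `j` of the Birkhoff sum: `q.1` is the waiting time until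
the orbit enters `(x₁, 1]`, `q.2` the number of its visits there in `[j, n)`. -/
noncomputable def weight (α γ x₁ : ℝ) (q : ℕ × ℕ) : ℝ :=
  min ((cutPoint α x₁ q.1 / x₁) ^ (α + γ)) (((1 + (1 + α) * x₁ ^ α)⁻¹ ^ γ) ^ q.2)

lemma weight_nonneg (hα : 0 ≤ α) (hx₁ : 0 < x₁) (γ : ℝ) : 0 ≤ weight α γ x₁ := fun q =>
  le_min (rpow_nonneg (div_nonneg (cutPoint_nonneg hα hx₁.le _) hx₁.le) _)
    (pow_nonneg (rpow_nonneg (by have := rpow_nonneg hx₁.le α; positivity) _) _)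

/-- Interpolating between the two bounds with exponent `θ = γ / (2 (α + γ))` leaves
`x_{L+1} ^ (α + γ / 2)`, summable in `L`. -/
lemma summable_weight (hα : 0 ≤ α) (hx₁ : x₁ ∈ Ioc 0 1) {γ : ℝ} (hγ0 : 0 < γ) (hγ1 : γ ≤ 1) :
    Summable (weight α γ x₁) := by
  have hc : 1 < 1 + (1 + α) * x₁ ^ α := by
    have := rpow_pos_of_pos hx₁.1 α
    nlinarith
  have hμ0 : 0 ≤ (1 + (1 + α) * x₁ ^ α)⁻¹ := by positivity
  have hθ : (α + γ) * (1 - γ / (2 * (α + γ))) = α + γ / 2 := by field_simp; ring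
  have hθ1 : γ / (2 * (α + γ)) ≤ 1 := by rw [div_le_one (by positivity)]; linarith
  have hP0 : ∀ L, 0 ≤ cutPoint α x₁ L / x₁ :=
    fun L => div_nonneg (cutPoint_nonneg hα hx₁.1.le _) hx₁.1.le
  refine summable_min_pow (P := fun L => (cutPoint α x₁ L / x₁) ^ (α + γ))
    (fun L => rpow_nonneg (hP0 L) _) ?_ (rpow_nonneg hμ0 γ)
    (rpow_lt_one hμ0 (inv_lt_one_of_one_lt₀ hc) hγ0) (by positivity) hθ1
  simp_rw [← rpow_mul (hP0 _), hθ, div_rpow (cutPoint_nonneg hα hx₁.1.le _) hx₁.1.le]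
  exact (summable_cutPoint_rpow hα hx₁ (half_pos hγ0) (by linarith)).div_const _

lemma tsum_weight_pos (hα : 0 ≤ α) (hx₁ : x₁ ∈ Ioc 0 1) {γ : ℝ} (hγ0 : 0 < γ) (hγ1 : γ ≤ 1) :
    0 < ∑' q, weight α γ x₁ q :=
  (summable_weight hα hx₁ hγ0 hγ1).tsum_pos (weight_nonneg hα hx₁.1 γ) (0, 0) (by
    simp [weight, cutPoint, div_self hx₁.1.ne'])

namespace SameItinerary

open Classical

variable {n : ℕ} {u v : ℝ}

lemma abs_sub_le (h : SameItinerary α x₁ n u v) (hα : 0 ≤ α) (hx₁ : 0 < x₁)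
    (hfix : lift α x₁ = 1) {j : ℕ} (hj : j ≤ n) :
    |(MP α)^[j] u - (MP α)^[j] v| ≤ (1 + (1 + α) * x₁ ^ α)⁻¹ ^
      (Nat.count (InRightBranch α x₁ u) n - Nat.count (InRightBranch α x₁ u) j) := by
  set c := 1 + (1 + α) * x₁ ^ α
  have hc : 1 ≤ c := by have := rpow_nonneg hx₁.le α; nlinarith
  have hexp := Nat.mul_pow_count_le_mul_pow_count (p := InRightBranch α x₁ u)
    (d := fun k => |(MP α)^[k] u - (MP α)^[k] v|) (c := c) (by linarith) (fun k _ hk => by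
      simp only [Function.iterate_succ_apply']
      exact mul_abs_sub_le_abs_sub hα hx₁.le hfix (iterate_mem_Ioc hα h.fst_mem k).1
        (iterate_mem_Ioc hα h.snd_mem k).1 (h.inRightBranch_iff k hk.le)) hj
  have hn1 : |(MP α)^[n] u - (MP α)^[n] v| ≤ 1 := by
    have hu := iterate_mem_Ioc hα h.fst_mem n
    have hv := iterate_mem_Ioc hα h.snd_mem n
    rw [abs_sub_le_iff]
    constructor <;> linarith [hu.1, hu.2, hv.1, hv.2]
  rw [← Nat.add_sub_cancel' (Nat.count_monotone _ hj), pow_add] at hexp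
  have hcj : 0 < c ^ Nat.count (InRightBranch α x₁ u) j := by positivity
  rw [inv_pow, ← one_div, le_div_iff₀ (by positivity)]
  refine le_of_mul_le_mul_left ?_ hcj
  nlinarith [abs_nonneg ((MP α)^[n] u - (MP α)^[n] v)]

lemma mem_Ioc_cutPoint (h : SameItinerary α x₁ n u v) (hα : 0 ≤ α) (hx₁ : 0 < x₁)
    (hfix : lift α x₁ = 1) {j L : ℕ} (hj : j ≤ n)
    (hL : Nat.nth (InRightBranch α x₁ u) (Nat.count (InRightBranch α x₁ u) j) = j + L + 1)
    {w : ℝ} (hw : w = u ∨ w = v) :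
    (MP α)^[j] w ∈ Ioc (cutPoint α x₁ (L + 1)) (cutPoint α x₁ L) := by
  have hnext := Nat.nth_count_le_of_le h.inRightBranch_last hj
  rw [hL] at hnext
  have hside : ∀ i ≤ n, InRightBranch α x₁ u i ↔ x₁ < (MP α)^[i] w := by
    rcases hw with rfl | rfl
    · exact fun i _ => Iff.rfl
    · exact h.inRightBranch_iff
  refine MP.mem_Ioc_cutPoint hα hx₁ hfix L (iterate_mem_Ioc hα ?_ j).1.le (fun i hi => ?_) ?_
  · rcases hw with rfl | rfl
    exacts [h.fst_mem, h.snd_mem]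
  · rw [← Function.iterate_add_apply, ← not_lt, add_comm, ← hside _ (by omega)]
    exact Nat.not_of_lt_nth_count (j := j) (by omega) (by rw [hL]; omega)
  · rw [← Function.iterate_add_apply, add_comm, ← add_assoc, ← hside _ hnext, ← hL]
    exact Nat.nth_count_mem_of_le h.inRightBranch_last hj

lemma abs_rpow_sub_le_weight (h : SameItinerary α x₁ n u v) (hα : 0 ≤ α) (hx₁ : x₁ ∈ Ioc 0 1)
    (hfix : lift α x₁ = 1) {γ : ℝ} (hγ0 : 0 < γ) (hγ1 : γ ≤ 1) {j : ℕ} (hj : j < n) :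
    |((MP α)^[j] u) ^ γ - ((MP α)^[j] v) ^ γ| ≤ weight α γ x₁
      (Nat.nth (InRightBranch α x₁ u) (Nat.count (InRightBranch α x₁ u) j) - j,
        Nat.count (InRightBranch α x₁ u) n - Nat.count (InRightBranch α x₁ u) j) := by
  have ha := iterate_mem_Ioc hα h.fst_mem j
  have hb := iterate_mem_Ioc hα h.snd_mem j
  refine le_min ?_ ?_
  · by_cases hpj : InRightBranch α x₁ u j
    · rw [Nat.nth_count hpj, Nat.sub_self, cutPoint, div_self hx₁.1.ne', one_rpow, abs_sub_le_iff]
      have := rpow_le_one ha.1.le ha.2 hγ0.le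
      have := rpow_le_one hb.1.le hb.2 hγ0.le
      constructor <;> linarith [rpow_nonneg ha.1.le γ, rpow_nonneg hb.1.le γ]
    have hne : Nat.nth (InRightBranch α x₁ u) (Nat.count (InRightBranch α x₁ u) j) ≠ j :=
      fun heq => hpj (heq ▸ Nat.nth_count_mem_of_le h.inRightBranch_last hj.le)
    obtain ⟨L, hL⟩ := Nat.exists_eq_add_of_lt
      ((Nat.le_nth_count_of_le h.inRightBranch_last hj.le).lt_of_ne hne.symm)
    have hu := h.mem_Ioc_cutPoint hα hx₁.1 hfix hj.le hL (Or.inl rfl)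
    have hv := h.mem_Ioc_cutPoint hα hx₁.1 hfix hj.le hL (Or.inr rfl)
    rw [hL, add_assoc, Nat.add_sub_cancel_left]
    exact abs_rpow_sub_rpow_le_cutPoint hα hx₁ hγ0 hγ1 hu hv
  · calc |((MP α)^[j] u) ^ γ - ((MP α)^[j] v) ^ γ| ≤ |(MP α)^[j] u - (MP α)^[j] v| ^ γ :=
          abs_rpow_sub_rpow_le_abs_sub_rpow ha.1.le hb.1.le hγ0.le hγ1
      _ ≤ ((1 + (1 + α) * x₁ ^ α)⁻¹ ^ (Nat.count (InRightBranch α x₁ u) n -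
            Nat.count (InRightBranch α x₁ u) j)) ^ γ :=
          rpow_le_rpow (abs_nonneg _) (h.abs_sub_le hα hx₁.1 hfix hj.le) hγ0.le
      _ = _ := (rpow_pow_comm (by have := hx₁.1; positivity) γ _).symm

lemma abs_sum_sub_le (h : SameItinerary α x₁ n u v) (hα : 0 ≤ α) (hx₁ : x₁ ∈ Ioc 0 1)
    (hfix : lift α x₁ = 1) {γ : ℝ} (hγ0 : 0 < γ) (hγ1 : γ ≤ 1) {φ φ' : ℝ → ℝ} {M : ℝ}
    (hM0 : 0 ≤ M) (hφ : ContinuousOn φ (Icc 0 1))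
    (hφ' : ∀ z ∈ Ioc (0 : ℝ) 1, HasDerivAt φ (φ' z) z)
    (hM : ∀ z ∈ Ioc (0 : ℝ) 1, |φ' z| ≤ M * (γ * z ^ (γ - 1))) :
    |∑ j ∈ Finset.range n, φ ((MP α)^[j] u) - ∑ j ∈ Finset.range n, φ ((MP α)^[j] v)| ≤
      M * ∑' q, weight α γ x₁ q :=
  calc |∑ j ∈ Finset.range n, φ ((MP α)^[j] u) - ∑ j ∈ Finset.range n, φ ((MP α)^[j] v)|
      ≤ ∑ j ∈ Finset.range n, |φ ((MP α)^[j] u) - φ ((MP α)^[j] v)| := by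
        rw [← Finset.sum_sub_distrib]
        exact Finset.abs_sum_le_sum_abs _ _
    _ ≤ ∑ j ∈ Finset.range n, M * |((MP α)^[j] u) ^ γ - ((MP α)^[j] v) ^ γ| :=
        Finset.sum_le_sum fun j _ => abs_sub_le_mul_abs_rpow_sub hγ0.le hφ hφ' hM
          (iterate_mem_Ioc hα h.fst_mem j) (iterate_mem_Ioc hα h.snd_mem j)
    _ ≤ M * ∑' q, weight α γ x₁ q := by
        rw [← Finset.mul_sum]
        refine mul_le_mul_of_nonneg_left ((Finset.sum_le_sum fun _ hj =>
          h.abs_rpow_sub_le_weight hα hx₁ hfix hγ0 hγ1 (Finset.mem_range.1 hj)).trans ?_) hM0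
        exact Nat.sum_le_tsum_nth_count (weight_nonneg hα hx₁.1 γ)
          (summable_weight hα hx₁ hγ0 hγ1) h.inRightBranch_last

end SameItinerary

end MP

theorem stmt8 (α γ : ℝ) (hα : 0 < α) (hγ : 0 < γ) (x₁ : ℝ)
    (hx₁ : x₁ ∈ Set.Ioo (0:ℝ) 1) (hfix : x₁ * (1 + x₁ ^ α) = 1) :
    ∃ D > (0:ℝ), ∀ φ φ' : ℝ → ℝ,
      ContinuousOn φ (Set.Icc 0 1) →
      (∀ z ∈ Set.Ioc (0:ℝ) 1, HasDerivAt φ (φ' z) z) →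
      ContinuousOn φ' (Set.Ioc 0 1) →
      (∃ c : ℝ, Filter.Tendsto (fun z => φ' z / (z ^ (γ - 1)))
        (nhdsWithin 0 (Set.Ioi 0)) (nhds c)) →
      ∀ M : ℝ, (∀ z ∈ Set.Ioc (0:ℝ) 1, |φ' z| ≤ M * (γ * z ^ (γ - 1))) →
      ∀ n : ℕ, 1 ≤ n → ∀ J : Set ℝ,
        J.Nonempty → IsPreconnected J →
        J ⊆ {z | z ∈ Set.Icc (0:ℝ) 1 ∧ (MP α)^[n] z ∈ Set.Ioc x₁ 1} →
        (∀ J' : Set ℝ, IsPreconnected J' → J ⊆ J' →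
          J' ⊆ {z | z ∈ Set.Icc (0:ℝ) 1 ∧ (MP α)^[n] z ∈ Set.Ioc x₁ 1} → J' = J) →
        ∀ u ∈ J, ∀ v ∈ J,
          |∑ j ∈ Finset.range n, φ ((MP α)^[j] u) -
            ∑ j ∈ Finset.range n, φ ((MP α)^[j] v)| ≤ D * M := by
  have hx₁' : x₁ ∈ Ioc 0 1 := Ioo_subset_Ioc_self hx₁
  have hγ' : 0 < min γ 1 := lt_min hγ one_pos
  refine ⟨max γ 1 * ∑' q, MP.weight α (min γ 1) x₁ q,
    mul_pos (hγ.trans_le (le_max_left γ 1)) (MP.tsum_weight_pos hα.le hx₁' hγ' (min_le_right _ _)),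
    fun φ φ' hφ hφ' _ _ M hM n _ J _ hJ hJn _ u hu v hv => ?_⟩
  have hM0 : 0 ≤ M := by
    have := (abs_nonneg _).trans (hM 1 ⟨one_pos, le_rfl⟩)
    rwa [one_rpow, mul_one, mul_nonneg_iff_of_pos_right hγ] at this
  have hM' (z : ℝ) (hz : z ∈ Ioc 0 1) :
      |φ' z| ≤ M * max γ 1 * (min γ 1 * z ^ (min γ 1 - 1)) := by
    rw [mul_assoc]
    exact (hM z hz).trans (mul_le_mul_of_nonneg_left (mul_rpow_sub_one_le_max_mul_min hz) hM0)
  have hit := MP.sameItinerary_of_isPreconnected hα.le hx₁.1 hfix hJ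
    (MP.subset_Ioc_of_iterate_mem_Ioc hx₁.1 hJn) (fun z hz => (hJn hz).2.1) hu hv
  calc _ ≤ M * max γ 1 * ∑' q, MP.weight α (min γ 1) x₁ q :=
        hit.abs_sum_sub_le hα.le hx₁' hfix hγ' (min_le_right _ _) (by positivity) hφ hφ' hM'
    _ = _ := by ring
end

section
/- Let (X, 𝓑, μ) be a probability space and T : X → X an ergodic measure-preserving map. For every integrable function φ : X → ℝ with ∫φ dμ = 0, for μ-almost every x ∈ X one has limsup_{n→∞} S_n φ(x) ≥ 0, where S_n φ = Σ_{j=0}^{n−1} φ ∘ T^j. -/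
/-!
Write `F = limsup S_n φ`, valued in `EReal`. Then `F = φ + F ∘ T`, so `{F = -∞}` is invariant
and, by ergodicity, null or conull. Where `F` is finite, `S_n φ x = F x - F (T^[n] x)`, and
Poincaré recurrence of the sets `{F < r}` forces `F x ≥ 0`. If instead `S_n φ → -∞` almost
everywhere, the running maximum `h = sup_{n ≥ 0} S_n φ` satisfies `h = max 0 (φ + h ∘ T)`. The
coboundary `h - h ∘ T` is integrable with integral zero, while the defect `h - h ∘ T - φ ≥ 0` is
positive at the point of each orbit following the last maximum of its Birkhoff sums, hence on a
set of positive measure; so `∫ φ < 0`.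
-/

open Set Filter MeasureTheory Function

theorem EReal.limsup_coe_add {ι : Type*} {f : Filter ι} [NeBot f] (c : ℝ) (u : ι → EReal) :
    limsup (fun i => (c : EReal) + u i) f = c + limsup u f := by
  apply le_antisymm
  · exact (EReal.limsup_add_le (u := fun _ => (c : EReal)) (v := u) (by simp) (by simp)).trans_eq
      (by rw [limsup_const])
  · calc (c : EReal) + limsup u f = limsup u f + liminf (fun _ => (c : EReal)) f := by
          rw [liminf_const, add_comm]
      _ ≤ limsup (u + fun _ => (c : EReal)) f := EReal.le_limsup_add
      _ = limsup (fun i => (c : EReal) + u i) f := by simp only [Pi.add_def, add_comm]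

theorem Filter.Tendsto.exists_forall_gt_imp_lt {α : Type*} [LinearOrder α] [NoBotOrder α]
    {u : ℕ → α} (hu : Tendsto u atTop atBot) : ∃ m, ∀ n, m < n → u n < u m := by
  rw [← Nat.cofinite_eq_atTop] at hu
  obtain ⟨k, hk⟩ := hu.exists_forall_ge
  have hfin : {n | u k ≤ u n}.Finite := by
    simpa using Filter.eventually_cofinite.1 (hu.eventually (eventually_lt_atBot (u k)))
  have hmem : sSup {n | u k ≤ u n} ∈ {n | u k ≤ u n} := Nat.sSup_mem ⟨k, le_rfl⟩ hfin.bddAbove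
  refine ⟨sSup {n | u k ≤ u n}, fun n hn => ?_⟩
  have : n ∉ {n | u k ≤ u n} := fun h => (le_csSup hfin.bddAbove h).not_gt hn
  exact (not_le.1 this).trans_le hmem

theorem MeasureTheory.MeasurePreserving.integral_sub_comp_eq_zero {X : Type*}
    [MeasurableSpace X] {μ : Measure X} [IsFiniteMeasure μ] {T : X → X}
    (hT : MeasurePreserving T μ μ) {h : X → ℝ} (hh : Measurable h)
    (hint : Integrable (fun x => h x - h (T x)) μ) :
    ∫ x, h x - h (T x) ∂μ = 0 := by
  -- the truncations of `h` at levels `±K` are integrable, and their coboundaries are dominated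
  -- by `|h - h ∘ T|` since truncation is 1-Lipschitz
  set c : ℕ → X → ℝ := fun K x => max (min (h x) K) (-K)
  have hc_meas (K : ℕ) : Measurable (c K) := (hh.min measurable_const).max measurable_const
  have hc_int (K : ℕ) : Integrable (c K) μ := by
    refine Integrable.of_bound (hc_meas K).aestronglyMeasurable K (ae_of_all _ fun x => ?_)
    simp only [c, Real.norm_eq_abs, abs_le]
    constructor <;> simp
  have hc_zero (K : ℕ) : ∫ x, c K x - c K (T x) ∂μ = 0 := by
    have hcomp : ∫ x, c K (T x) ∂μ = ∫ x, c K x ∂μ := by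
      conv_rhs => rw [← hT.map_eq]
      exact (integral_map hT.aemeasurable (hc_meas K).aestronglyMeasurable).symm
    rw [integral_sub (g := fun x => c K (T x)) (hc_int K)
      (hT.integrable_comp_of_integrable (hc_int K)), hcomp, sub_self]
  have hlim := tendsto_integral_of_dominated_convergence (F := fun K x => c K x - c K (T x))
    (fun x => |h x - h (T x)|)
    (fun K => ((hc_meas K).sub ((hc_meas K).comp hT.measurable)).aestronglyMeasurable)
    hint.abs
    (fun K => ae_of_all _ fun x => by
      simp only [c, Real.norm_eq_abs]
      exact (abs_max_sub_max_le_abs _ _ _).trans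
        ((abs_min_sub_min_le_max _ _ _ _).trans (by simp)))
    (ae_of_all _ fun x => by
      obtain ⟨K₀, hK₀⟩ := exists_nat_ge (max |h x| |h (T x)|)
      refine tendsto_atTop_of_eventually_const (i₀ := K₀) fun K hK => ?_
      have hK' : max |h x| |h (T x)| ≤ K := hK₀.trans (Nat.cast_le.2 hK)
      have hx := abs_le.1 ((le_max_left _ _).trans hK')
      have hTx := abs_le.1 ((le_max_right _ _).trans hK')
      simp only [c]
      rw [min_eq_left hx.2, max_eq_left hx.1, min_eq_left hTx.2, max_eq_left hTx.1])
  simp only [hc_zero] at hlim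
  exact tendsto_nhds_unique hlim tendsto_const_nhds

theorem MeasureTheory.MeasurePreserving.measure_pos_of_ae_exists_iterate_mem {X : Type*}
    [MeasurableSpace X] {μ : Measure X} [NeZero μ] {T : X → X} (hT : MeasurePreserving T μ μ)
    {A : Set X} (hA : MeasurableSet A) (hvisit : ∀ᵐ x ∂μ, ∃ m, T^[m] x ∈ A) : 0 < μ A := by
  refine pos_iff_ne_zero.2 fun hA0 => ?_
  have hnull : ∀ᵐ x ∂μ, x ∉ ⋃ m, T^[m] ⁻¹' A := measure_eq_zero_iff_ae_notMem.1 <|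
    measure_iUnion_null fun m => by rwa [(hT.iterate m).measure_preimage hA.nullMeasurableSet]
  have := ae_neBot.2 (NeZero.ne μ)
  obtain ⟨x, hx, hxA⟩ := (hvisit.and hnull).exists
  exact hxA (mem_iUnion.2 hx)

theorem measurable_birkhoffSum {X : Type*} [MeasurableSpace X] {T : X → X} {φ : X → ℝ}
    (hT : Measurable T) (hφ : Measurable φ) (n : ℕ) : Measurable (birkhoffSum T φ n) :=
  Finset.measurable_sum _ fun k _ => hφ.comp (hT.iterate k)

section BirkhoffMax

variable {X : Type*} {T : X → X} {φ : X → ℝ} {x : X}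

/-- Only meaningful where the Birkhoff sums are bounded above: otherwise `⨆` returns `0`. -/
noncomputable def birkhoffMax (T : X → X) (φ : X → ℝ) (x : X) : ℝ :=
  ⨆ n, birkhoffSum T φ n x

theorem tendsto_birkhoffSum_apply_atBot (hx : Tendsto (birkhoffSum T φ · x) atTop atBot) :
    Tendsto (birkhoffSum T φ · (T x)) atTop atBot := by
  have hsucc := tendsto_atBot_add_const_left _ (-φ x) ((tendsto_add_atTop_iff_nat 1).2 hx)
  simpa only [birkhoffSum_succ', neg_add_cancel_left] using hsucc

theorem tendsto_birkhoffSum_iterate_atBot (hx : Tendsto (birkhoffSum T φ · x) atTop atBot)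
    (m : ℕ) : Tendsto (birkhoffSum T φ · (T^[m] x)) atTop atBot := by
  induction m generalizing x with
  | zero => exact hx
  | succ m ih => rw [iterate_succ_apply]; exact ih (tendsto_birkhoffSum_apply_atBot hx)

theorem birkhoffSum_le_birkhoffMax (hx : Tendsto (birkhoffSum T φ · x) atTop atBot) (n : ℕ) :
    birkhoffSum T φ n x ≤ birkhoffMax T φ x := by
  obtain ⟨k, hk⟩ := (Nat.cofinite_eq_atTop ▸ hx).exists_forall_ge
  exact le_ciSup ⟨_, forall_mem_range.2 hk⟩ n

theorem exists_birkhoffMax_eq (hx : Tendsto (birkhoffSum T φ · x) atTop atBot) :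
    ∃ k, birkhoffMax T φ x = birkhoffSum T φ k x := by
  obtain ⟨k, hk⟩ := (Nat.cofinite_eq_atTop ▸ hx).exists_forall_ge
  exact ⟨k, le_antisymm (ciSup_le hk) (birkhoffSum_le_birkhoffMax hx k)⟩

theorem birkhoffMax_nonneg (hx : Tendsto (birkhoffSum T φ · x) atTop atBot) :
    0 ≤ birkhoffMax T φ x :=
  (birkhoffSum_zero T φ x).symm.trans_le (birkhoffSum_le_birkhoffMax hx 0)

theorem birkhoffMax_eq_max (hx : Tendsto (birkhoffSum T φ · x) atTop atBot) :
    birkhoffMax T φ x = max 0 (φ x + birkhoffMax T φ (T x)) := by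
  have hTx := tendsto_birkhoffSum_apply_atBot hx
  apply le_antisymm
  · obtain ⟨_ | k, hk⟩ := exists_birkhoffMax_eq hx
    · simp [hk]
    · rw [hk, birkhoffSum_succ']
      exact le_max_of_le_right (add_le_add_right (birkhoffSum_le_birkhoffMax hTx k) _)
  · obtain ⟨k, hk⟩ := exists_birkhoffMax_eq hTx
    refine max_le (birkhoffMax_nonneg hx) ?_
    rw [hk, ← birkhoffSum_succ']
    exact birkhoffSum_le_birkhoffMax hx _

theorem exists_add_birkhoffMax_iterate_neg (hx : Tendsto (birkhoffSum T φ · x) atTop atBot) :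
    ∃ m, φ (T^[m] x) + birkhoffMax T φ (T (T^[m] x)) < 0 := by
  obtain ⟨m, hm⟩ := hx.exists_forall_gt_imp_lt
  have hTm := tendsto_birkhoffSum_apply_atBot (tendsto_birkhoffSum_iterate_atBot hx m)
  obtain ⟨k, hk⟩ := exists_birkhoffMax_eq hTm
  refine ⟨m, ?_⟩
  have hlt := hm (m + (k + 1)) (by omega)
  rw [birkhoffSum_add, birkhoffSum_succ'] at hlt
  linarith

theorem abs_birkhoffMax_sub_le (hx : Tendsto (birkhoffSum T φ · x) atTop atBot) :
    |birkhoffMax T φ x - birkhoffMax T φ (T x)| ≤ |φ x| := by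
  have h0 := birkhoffMax_nonneg (tendsto_birkhoffSum_apply_atBot hx)
  rw [birkhoffMax_eq_max hx, abs_le]
  constructor <;> cases max_cases 0 (φ x + birkhoffMax T φ (T x)) <;> cases abs_cases (φ x) <;>
    linarith

end BirkhoffMax

theorem MeasureTheory.MeasurePreserving.integral_neg_of_tendsto_birkhoffSum_atBot {X : Type*}
    [MeasurableSpace X] {μ : Measure X} [IsFiniteMeasure μ] [NeZero μ] {T : X → X} {φ : X → ℝ}
    (hT : MeasurePreserving T μ μ) (hφ : Measurable φ) (hint : Integrable φ μ)
    (hbot : ∀ᵐ x ∂μ, Tendsto (birkhoffSum T φ · x) atTop atBot) :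
    ∫ x, φ x ∂μ < 0 := by
  set h := birkhoffMax T φ
  have hh : Measurable h := Measurable.iSup fun n => measurable_birkhoffSum hT.measurable hφ n
  have hcob : Integrable (fun x => h x - h (T x)) μ :=
    hint.mono (hh.sub (hh.comp hT.measurable)).aestronglyMeasurable
      (hbot.mono fun x hx => by simpa only [Real.norm_eq_abs] using abs_birkhoffMax_sub_le hx)
  have hdefect_nonneg : ∀ᵐ x ∂μ, 0 ≤ h x - h (T x) - φ x := hbot.mono fun x hx => by
    have hx' : h x = max 0 (φ x + h (T x)) := birkhoffMax_eq_max hx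
    linarith [le_max_right 0 (φ x + h (T x))]
  set A := {x | φ x + h (T x) < 0}
  have hA : 0 < μ A :=
    hT.measure_pos_of_ae_exists_iterate_mem
      (measurableSet_lt (hφ.add (hh.comp hT.measurable)) measurable_const)
      (hbot.mono fun x hx => exists_add_birkhoffMax_iterate_neg hx)
  have hdefect_pos : A ≤ᵐ[μ] support fun x => h x - h (T x) - φ x := hbot.mono fun x hx hxA => by
    have h0 : 0 ≤ h x := birkhoffMax_nonneg hx
    have hxA' : φ x + h (T x) < 0 := hxA
    exact (show (0 : ℝ) < h x - h (T x) - φ x by linarith).ne'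
  have hdefect : 0 < ∫ x, h x - h (T x) - φ x ∂μ :=
    (integral_pos_iff_support_of_nonneg_ae hdefect_nonneg (hcob.sub hint)).2
      (hA.trans_le (measure_mono_ae hdefect_pos))
  rw [integral_sub hcob hint, hT.integral_sub_comp_eq_zero hh hcob] at hdefect
  linarith

section BirkhoffLimsup

variable {X : Type*} {T : X → X} {φ : X → ℝ}

noncomputable def birkhoffLimsup (T : X → X) (φ : X → ℝ) (x : X) : EReal :=
  limsup (fun n => ((birkhoffSum T φ n x : ℝ) : EReal)) atTop

theorem birkhoffLimsup_eq_add (n : ℕ) (x : X) :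
    birkhoffLimsup T φ x = birkhoffSum T φ n x + birkhoffLimsup T φ (T^[n] x) := by
  unfold birkhoffLimsup
  conv_lhs => rw [← limsup_nat_add _ n]
  rw [← EReal.limsup_coe_add]
  simp_rw [add_comm _ n, birkhoffSum_add, EReal.coe_add]

theorem measurable_birkhoffLimsup [MeasurableSpace X] (hT : Measurable T) (hφ : Measurable φ) :
    Measurable (birkhoffLimsup T φ) :=
  Measurable.limsup fun n => (measurable_birkhoffSum hT hφ n).coe_real_ereal

theorem zero_le_birkhoffLimsup_of_frequently_lt {x : X} (hbot : birkhoffLimsup T φ x ≠ ⊥)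
    (hrec : ∀ r : ℚ, birkhoffLimsup T φ x < (r : ℝ) →
      ∃ᶠ n in atTop, birkhoffLimsup T φ (T^[n] x) < (r : ℝ)) :
    0 ≤ birkhoffLimsup T φ x := by
  by_contra! hneg
  obtain ⟨r, hxr, hr⟩ := EReal.exists_rat_btwn_of_lt hneg
  set a := (birkhoffLimsup T φ x).toReal
  have ha : birkhoffLimsup T φ x = a :=
    (EReal.coe_toReal (hneg.trans EReal.zero_lt_top).ne hbot).symm
  have hfreq : ∃ᶠ n in atTop, ((a - r : ℝ) : EReal) ≤ birkhoffSum T φ n x :=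
    (hrec r hxr).mono fun n hn => by
      have hcocycle := birkhoffLimsup_eq_add (T := T) (φ := φ) n x
      rw [ha] at hcocycle
      generalize birkhoffLimsup T φ (T^[n] x) = L at hcocycle hn
      induction L using EReal.rec with
      | bot => simp at hcocycle
      | top => simp at hcocycle
      | coe b =>
        norm_cast at hcocycle hn ⊢
        linarith
  have hle : ((a - r : ℝ) : EReal) ≤ a := ha ▸ le_limsup_of_frequently_le hfreq
  have hr' : (r : ℝ) < 0 := by exact_mod_cast hr
  norm_cast at hle
  linarith

end BirkhoffLimsup

theorem Ergodic.ae_zero_le_birkhoffLimsup {X : Type*} [MeasurableSpace X] {μ : Measure X}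
    [IsFiniteMeasure μ] [NeZero μ] {T : X → X} {φ : X → ℝ} (hT : Ergodic T μ) (hφ : Measurable φ)
    (hint : Integrable φ μ) (h0 : 0 ≤ ∫ x, φ x ∂μ) :
    ∀ᵐ x ∂μ, 0 ≤ birkhoffLimsup T φ x := by
  have hmeas := measurable_birkhoffLimsup hT.toMeasurePreserving.measurable hφ
  have hinv : T ⁻¹' {x | birkhoffLimsup T φ x = ⊥} = {x | birkhoffLimsup T φ x = ⊥} := by
    ext x
    simp [birkhoffLimsup_eq_add 1 x]
  rcases hT.ae_mem_or_ae_notMem (hmeas (measurableSet_singleton ⊥)) hinv with hbot | hbot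
  · refine absurd h0 <| not_le.2 <| hT.toMeasurePreserving.integral_neg_of_tendsto_birkhoffSum_atBot
      hφ hint (hbot.mono fun x hx => EReal.tendsto_coe_nhds_bot_iff.1 ?_)
    exact tendsto_order.2 ⟨fun a ha => (not_lt_bot ha).elim,
      fun a ha => eventually_lt_of_limsup_lt (show birkhoffLimsup T φ x < a from hx ▸ ha)⟩
  · have hrec : ∀ᵐ x ∂μ, ∀ r : ℚ, birkhoffLimsup T φ x < (r : ℝ) →
        ∃ᶠ n in atTop, birkhoffLimsup T φ (T^[n] x) < (r : ℝ) :=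
      ae_all_iff.2 fun r => hT.toMeasurePreserving.conservative.ae_mem_imp_frequently_image_mem
        (measurableSet_lt hmeas measurable_const).nullMeasurableSet
    filter_upwards [hbot, hrec] with x hx hxr
    exact zero_le_birkhoffLimsup_of_frequently_lt hx hxr

theorem stmt10 {X : Type*} [MeasurableSpace X] (μ : MeasureTheory.Measure X)
    [MeasureTheory.IsProbabilityMeasure μ] (T : X → X) (hT : Ergodic T μ)
    (φ : X → ℝ) (hint : MeasureTheory.Integrable φ μ)
    (h0 : ∫ x, φ x ∂μ = 0) :
    ∀ᵐ x ∂μ, (0 : EReal) ≤ Filter.limsup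
      (fun n : ℕ => ((∑ j ∈ Finset.range n, φ (T^[j] x) : ℝ) : EReal)) Filter.atTop := by
  have hmk := hint.aemeasurable.ae_eq_mk
  have hS : ∀ᵐ x ∂μ, ∀ n, birkhoffSum T φ n x = birkhoffSum T (hint.aemeasurable.mk φ) n x :=
    ae_all_iff.2 fun n => hT.quasiMeasurePreserving.birkhoffSum_ae_eq_of_ae_eq hmk n
  filter_upwards [hS, hT.ae_zero_le_birkhoffLimsup hint.aemeasurable.measurable_mk
    (hint.congr hmk) (by rw [← integral_congr_ae hmk, h0])] with x hx hle
  simp only [birkhoffLimsup, ← hx] at hle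
  exact hle
end

section
/- Let α > 0 and γ ∈ (0, α], and let f be the Manneville–Pomeau map of parameter α with backward orbit (x_n) of 1. Let φ be continuous on [0,1], and suppose there are c < 0 and n₀ ∈ ℕ such that φ(x) − φ(0) < c x^γ for all x ∈ (0, x_{n₀}], and (1/(2α^{γ/α})) n^{−γ/α} < x_n^γ for all n ≥ n₀. Then for θ = 1 − γ/α and every y ∈ J₀ with return time m(y) ≥ n₀ one has, with ‖φ‖ the sup norm: S_{m(y)} φ(y) − m(y)φ(0) ≤ 2n₀‖φ‖ + c Σ_{j=n₀+1}^{m(y)} x_j^γ ≤ 2n₀‖φ‖ − (c/(2α^{γ/α}θ))(n₀+1)^θ + (c/(2α^{γ/α}θ))(m(y)+1)^θ when γ < α. -/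
/-!
For `1 ≤ j ≤ m - n₀` the point `f^[j] y` lies in `(x (m-j+1), x (m-j)] ⊆ (0, x n₀]`, so
`φ (f^[j] y) - φ 0 ≤ c * x (m-j+1) ^ γ`; the remaining `n₀` terms are at most `2‖φ‖`.
For the second inequality, the lower bound on `x n ^ γ` reduces it to comparing
`∑ j ^ (θ - 1)` with `∫ s ^ (θ - 1) ds`, which holds term by term by Bernoulli's inequality
`(t + 1) ^ θ - t ^ θ ≤ θ t ^ (θ - 1)`.
-/
open Real Set Filter Topology

lemma rpow_add_one_sub_rpow_le {θ t : ℝ} (hθ0 : 0 ≤ θ) (hθ1 : θ ≤ 1) (ht : 0 < t) :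
    (t + 1) ^ θ - t ^ θ ≤ θ * t ^ (θ - 1) := by
  have hbernoulli : (1 + t⁻¹) ^ θ ≤ 1 + θ * t⁻¹ :=
    rpow_one_add_le_one_add_mul_self (by linarith [inv_pos.2 ht]) hθ0 hθ1
  calc (t + 1) ^ θ - t ^ θ = t ^ θ * ((1 + t⁻¹) ^ θ - 1) := by
        rw [mul_sub, ← mul_rpow ht.le (by positivity)]; field_simp
    _ ≤ t ^ θ * (θ * t⁻¹) := by gcongr; linarith
    _ = θ * t ^ (θ - 1) := by rw [rpow_sub_one ht.ne']; ring

lemma sub_rpow_div_le_sum_rpow_sub_one {θ : ℝ} (hθ0 : 0 < θ) (hθ1 : θ ≤ 1) {n m : ℕ}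
    (hnm : n ≤ m) :
    (((m : ℝ) + 1) ^ θ - ((n : ℝ) + 1) ^ θ) / θ ≤
      ∑ j ∈ Finset.Icc (n + 1) m, (j : ℝ) ^ (θ - 1) := by
  induction m, hnm using Nat.le_induction with
  | base => simp
  | succ m _ ih =>
    have hstep := rpow_add_one_sub_rpow_le hθ0.le hθ1 (t := (m : ℝ) + 1) (by positivity)
    rw [Finset.sum_Icc_succ_top (by omega), Nat.cast_succ]
    calc (((m : ℝ) + 1 + 1) ^ θ - ((n : ℝ) + 1) ^ θ) / θ
        = (((m : ℝ) + 1) ^ θ - ((n : ℝ) + 1) ^ θ) / θ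
          + (((m : ℝ) + 1 + 1) ^ θ - ((m : ℝ) + 1) ^ θ) / θ := by ring
      _ ≤ _ := add_le_add ih ((div_le_iff₀' hθ0).2 hstep)

lemma sum_range_le_of_le_reflect {g h : ℕ → ℝ} {B : ℝ} {n M : ℕ} (hn : 1 ≤ n) (hnM : n ≤ M)
    (hgh : ∀ j ∈ Finset.Icc 1 (M - n), g j ≤ h (M + 1 - j)) (hgB : ∀ j < M, g j ≤ B) :
    ∑ j ∈ Finset.range M, g j ≤ n * B + ∑ k ∈ Finset.Icc (n + 1) M, h k := by
  have hfilter : (Finset.range M).filter (· ∈ Finset.Icc 1 (M - n)) = Finset.Icc 1 (M - n) := by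
    ext j; simp only [Finset.mem_filter, Finset.mem_range, Finset.mem_Icc]; omega
  have hcard : ((Finset.range M).filter (· ∉ Finset.Icc 1 (M - n))).card = n := by
    have :=
      Finset.card_filter_add_card_filter_not (s := Finset.range M) (· ∈ Finset.Icc 1 (M - n))
    rw [hfilter, Finset.card_range, Nat.card_Icc] at this
    omega
  have hreflect :
      ∑ j ∈ Finset.Icc 1 (M - n), h (M + 1 - j) = ∑ k ∈ Finset.Icc (n + 1) M, h k := by
    refine Finset.sum_nbij' (M + 1 - ·) (M + 1 - ·) ?_ ?_ ?_ ?_ ?_ <;> intro j hj <;>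
      simp only [Finset.mem_Icc] at hj ⊢ <;> omega
  rw [← Finset.sum_filter_add_sum_filter_not (Finset.range M) (· ∈ Finset.Icc 1 (M - n)),
    hfilter, add_comm]
  gcongr
  · calc ∑ j ∈ (Finset.range M).filter (· ∉ Finset.Icc 1 (M - n)), g j
        ≤ ∑ _ ∈ (Finset.range M).filter (· ∉ Finset.Icc 1 (M - n)), B :=
          Finset.sum_le_sum fun j hj => hgB j (Finset.mem_range.1 (Finset.mem_filter.1 hj).1)
      _ = n * B := by rw [Finset.sum_const, hcard, nsmul_eq_mul]
  · exact hreflect ▸ Finset.sum_le_sum hgh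

lemma mul_sub_rpow_div_le_sum_Icc {u : ℕ → ℝ} {b s : ℝ} (hb : 0 ≤ b) (hs0 : 0 ≤ s) (hs1 : s < 1)
    {n M : ℕ} (hnM : n ≤ M) (hu : ∀ k, n ≤ k → b * (k : ℝ) ^ (-s) ≤ u k) :
    b * ((((M : ℝ) + 1) ^ (1 - s) - ((n : ℝ) + 1) ^ (1 - s)) / (1 - s)) ≤
      ∑ k ∈ Finset.Icc (n + 1) M, u k := by
  have hcomp := sub_rpow_div_le_sum_rpow_sub_one (θ := 1 - s) (by linarith) (by linarith) hnM
  rw [sub_sub_cancel_left] at hcomp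
  calc _ ≤ b * ∑ k ∈ Finset.Icc (n + 1) M, (k : ℝ) ^ (-s) := by gcongr
    _ ≤ _ := by
      rw [Finset.mul_sum]
      exact Finset.sum_le_sum fun k hk => hu k (by linarith [(Finset.mem_Icc.1 hk).1])

lemma mem_Ioc_of_succ_mem_Ioo {x : ℕ → ℝ} (hx0 : x 0 = 1)
    (hx : ∀ n, x (n + 1) ∈ Ioo 0 (x n)) (n : ℕ) : x n ∈ Ioc 0 1 := by
  induction n with
  | zero => simp [hx0]
  | succ n ih => exact ⟨(hx n).1, (hx n).2.le.trans ih.2⟩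

lemma birkhoff_sum_sub_le {f φ : ℝ → ℝ} {x : ℕ → ℝ} {y γ K c : ℝ} {n₀ M : ℕ}
    (hx : ∀ n, x n ∈ Ioc 0 1) (hxanti : Antitone x) (hγ : 0 ≤ γ) (hc : c ≤ 0)
    (hK : ∀ t ∈ Icc (0 : ℝ) 1, |φ t| ≤ K) (hφ0 : ∀ t ∈ Ioc 0 (x n₀), φ t - φ 0 ≤ c * t ^ γ)
    (hn₀ : 1 ≤ n₀) (hn₀M : n₀ ≤ M) (hy : y ∈ Icc 0 1)
    (horb : ∀ j, 1 ≤ j → j < M → f^[j] y ∈ Ioc (x (M - j + 1)) (x (M - j))) :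
    ∑ j ∈ Finset.range M, φ (f^[j] y) - M * φ 0 ≤
      2 * n₀ * K + c * ∑ k ∈ Finset.Icc (n₀ + 1) M, x k ^ γ := by
  have horbit : ∀ j < M, f^[j] y ∈ Icc 0 1 := by
    rintro (_ | j) hj
    · exact hy
    · have h := horb (j + 1) (by omega) hj
      exact ⟨((hx _).1.trans h.1).le, h.2.trans (hx _).2⟩
  have hfar : ∀ j < M, φ (f^[j] y) - φ 0 ≤ 2 * K := fun j hj => by
    linarith [abs_le.1 (hK _ (horbit j hj)), abs_le.1 (hK 0 (by simp))]
  have hnear : ∀ j ∈ Finset.Icc 1 (M - n₀), φ (f^[j] y) - φ 0 ≤ c * x (M + 1 - j) ^ γ := by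
    intro j hj
    obtain ⟨hj1, hjM⟩ := Finset.mem_Icc.1 hj
    obtain ⟨hlo, hhi⟩ := horb j hj1 (by omega)
    rw [show M + 1 - j = M - j + 1 by omega]
    calc φ (f^[j] y) - φ 0 ≤ c * (f^[j] y) ^ γ :=
          hφ0 _ ⟨(hx _).1.trans hlo, hhi.trans (hxanti (by omega))⟩
      _ ≤ c * x (M - j + 1) ^ γ :=
          mul_le_mul_of_nonpos_left (rpow_le_rpow (hx _).1.le hlo.le hγ) hc
  calc ∑ j ∈ Finset.range M, φ (f^[j] y) - M * φ 0
      = ∑ j ∈ Finset.range M, (φ (f^[j] y) - φ 0) := by simp [Finset.sum_sub_distrib]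
    _ ≤ n₀ * (2 * K) + ∑ k ∈ Finset.Icc (n₀ + 1) M, c * x k ^ γ :=
        sum_range_le_of_le_reflect hn₀ hn₀M hnear hfar
    _ = _ := by rw [← Finset.mul_sum]; ring

theorem stmt17_general (α γ : ℝ) (hα : 0 < α) (hγ : 0 < γ) (hγα : γ < α)
    (x₁ : ℝ) (hx₁ : x₁ ∈ Set.Ioo (0:ℝ) 1)
    (x : ℕ → ℝ) (hx0 : x 0 = 1)
    (hx : ∀ n, x (n+1) ∈ Set.Ioo (0:ℝ) (x n) ∧ MP α (x (n+1)) = x n)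
    (φ : ℝ → ℝ)
    (K : ℝ) (hK : ∀ t ∈ Set.Icc (0:ℝ) 1, |φ t| ≤ K)
    (c : ℝ) (hc : c < 0) (n₀ : ℕ) (hn₀ : 1 ≤ n₀)
    (h1 : ∀ t ∈ Set.Ioc (0:ℝ) (x n₀), φ t - φ 0 < c * t ^ γ)
    (h2 : ∀ n : ℕ, n₀ ≤ n → 1 / (2 * α ^ (γ/α)) * (n:ℝ) ^ (-(γ/α)) < (x n) ^ γ)
    (y : ℝ) (M : ℕ) (hMn₀ : n₀ ≤ M)
    (hy : y ∈ Set.Ioc x₁ 1)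
    (horb : ∀ j, 1 ≤ j → j < M → (MP α)^[j] y ∈ Set.Ioc (x (M - j + 1)) (x (M - j))) :
    (∑ j ∈ Finset.range M, φ ((MP α)^[j] y)) - M * φ 0 ≤
        2 * n₀ * K + c * ∑ j ∈ Finset.Icc (n₀+1) M, (x j) ^ γ ∧
    2 * n₀ * K + c * ∑ j ∈ Finset.Icc (n₀+1) M, (x j) ^ γ ≤
        2 * n₀ * K - c / (2 * α ^ (γ/α) * (1 - γ/α)) * ((n₀:ℝ) + 1) ^ (1 - γ/α)
          + c / (2 * α ^ (γ/α) * (1 - γ/α)) * ((M:ℝ) + 1) ^ (1 - γ/α) := by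
  have hxIoc := mem_Ioc_of_succ_mem_Ioo hx0 fun n => (hx n).1
  have hxanti : Antitone x := antitone_nat_of_succ_le fun n => (hx n).1.2.le
  refine ⟨birkhoff_sum_sub_le hxIoc hxanti hγ.le hc.le hK (fun t ht => (h1 t ht).le) hn₀ hMn₀
    ⟨(hx₁.1.trans hy.1).le, hy.2⟩ horb, ?_⟩
  have hs1 : γ / α < 1 := (div_lt_one hα).2 hγα
  have hlower := mul_sub_rpow_div_le_sum_Icc (by positivity) (div_pos hγ hα).le hs1 hMn₀
    fun n hn => (h2 n hn).le
  have hθ : 1 - γ / α ≠ 0 := by linarith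
  have hA : α ^ (γ / α) ≠ 0 := (rpow_pos_of_pos hα _).ne'
  have hrw : c * (1 / (2 * α ^ (γ / α)) * ((((M : ℝ) + 1) ^ (1 - γ / α)
        - ((n₀ : ℝ) + 1) ^ (1 - γ / α)) / (1 - γ / α)))
      = c / (2 * α ^ (γ/α) * (1 - γ/α)) * ((M:ℝ) + 1) ^ (1 - γ/α)
        - c / (2 * α ^ (γ/α) * (1 - γ/α)) * ((n₀:ℝ) + 1) ^ (1 - γ/α) := by
    field_simp
  linarith [mul_le_mul_of_nonpos_left hlower hc.le]

theorem stmt17 (α γ : ℝ) (hα : 0 < α) (hγ : 0 < γ) (hγα : γ < α)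
    (x₁ : ℝ) (hx₁ : x₁ ∈ Set.Ioo (0:ℝ) 1) (hfix : x₁ * (1 + x₁ ^ α) = 1)
    (x : ℕ → ℝ) (hx0 : x 0 = 1)
    (hx : ∀ n, x (n+1) ∈ Set.Ioo (0:ℝ) (x n) ∧ MP α (x (n+1)) = x n)
    (φ : ℝ → ℝ) (hφ : ContinuousOn φ (Set.Icc 0 1))
    (K : ℝ) (hK : ∀ t ∈ Set.Icc (0:ℝ) 1, |φ t| ≤ K)
    (c : ℝ) (hc : c < 0) (n₀ : ℕ) (hn₀ : 1 ≤ n₀)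
    (h1 : ∀ t ∈ Set.Ioc (0:ℝ) (x n₀), φ t - φ 0 < c * t ^ γ)
    (h2 : ∀ n : ℕ, n₀ ≤ n → 1 / (2 * α ^ (γ/α)) * (n:ℝ) ^ (-(γ/α)) < (x n) ^ γ)
    (y : ℝ) (M : ℕ) (hM1 : 1 ≤ M) (hMn₀ : n₀ ≤ M)
    (hy : y ∈ Set.Ioc x₁ 1)
    (hret : (MP α)^[M] y ∈ Set.Ioc x₁ 1)
    (hmin : ∀ j, 1 ≤ j → j < M → (MP α)^[j] y ∉ Set.Ioc x₁ 1)
    (horb : ∀ j, 1 ≤ j → j < M → (MP α)^[j] y ∈ Set.Ioc (x (M - j + 1)) (x (M - j))) :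
    (∑ j ∈ Finset.range M, φ ((MP α)^[j] y)) - M * φ 0 ≤
        2 * n₀ * K + c * ∑ j ∈ Finset.Icc (n₀+1) M, (x j) ^ γ ∧
    2 * n₀ * K + c * ∑ j ∈ Finset.Icc (n₀+1) M, (x j) ^ γ ≤
        2 * n₀ * K - c / (2 * α ^ (γ/α) * (1 - γ/α)) * ((n₀:ℝ) + 1) ^ (1 - γ/α)
          + c / (2 * α ^ (γ/α) * (1 - γ/α)) * ((M:ℝ) + 1) ^ (1 - γ/α) :=
  stmt17_general α γ hα hγ hγα x₁ hx₁ x hx0 hx φ K hK c hc n₀ hn₀ h1 h2 y M hMn₀ hy horb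
end
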